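/- arXiv:1012.5087 — 6 statements merged into one kernel-verified Lean document; each statement's English description precedes it below -/
import Mathlib

section
/- Let p be a prime, n ≥ 2, and f, g ∈ ℤ_p[x_1,…,x_n]. Let k, l be positive integers with k ≥ l. Let a ∈ ℤ_p^n be such that f(a) ≡ 0 mod p, g(a) ≡ 0 mod p, and the 2×n Jacobian matrix with rows (∂f/∂x_1(a),…,∂f/∂x_n(a)) and (∂g/∂x_1(a),…,∂g/∂x_n(a)) has rank 2 modulo p. Then the set A_{k,l} = {x ∈ a + (pℤ_p)^n : f(x) ≡ 0 mod p^k and g(x) ≡ 0 mod p^l} has Haar measure μ(A_{k,l}) = p^{−n−k−l+2}. -/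
/-!
Cut `ℤ_p^n` into residue classes modulo `p^m`; they all have measure `p^(-mn)`. Let `x₀` satisfy
`F ≡ 0 mod p^m` for a family `F` of `e` polynomials, with `m ≥ 1` and with Jacobian `J` of `F` at
`x₀` surjective modulo `p`. By first-order Taylor expansion, `x = x₀ + p^m τ` satisfies
`F(x) ≡ 0 mod p^(m+1)` iff `τ mod p` solves the affine system `J τ ≡ -F(x₀)/p^m mod p`, which has
`p^(n-e)` solutions. Hence raising by one the precision of `e` equations whose Jacobian stays
surjective mod `p` multiplies the measure by `p^(-e)`. Start from `a + (pℤ_p)^n`, of measure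
`p^(-n)`, on which `f ≡ g ≡ 0 mod p` already holds; raise `f` and `g` together from `1` to `l`,
then `f` alone from `l` to `k` (the `f`-row of the Jacobian is nonzero mod `p`): this gives
`p^(-n) p^(-2(l-1)) p^(-(k-l))`.
-/

open MeasureTheory MvPolynomial

noncomputable instance (p : ℕ) [Fact p.Prime] : MeasurableSpace ℤ_[p] := borel _
instance (p : ℕ) [Fact p.Prime] : BorelSpace ℤ_[p] := ⟨rfl⟩

/-- The Haar measure on `ℤ_p^n`, normalized so that `μ(ℤ_p^n) = 1`. -/
noncomputable def padicHaar (p : ℕ) [Fact p.Prime] (n : ℕ) : Measure (Fin n → ℤ_[p]) :=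
  Measure.addHaarMeasure ⟨⟨Set.univ, isCompact_univ⟩, by simp⟩

open scoped ENNReal

theorem MeasureTheory.measure_eq_mul_of_forall_fiber {α β : Type*} [MeasurableSpace α] [Fintype β]
    {μ : Measure α} {φ : α → β} (hφ : ∀ y, MeasurableSet (φ ⁻¹' {y})) {S T : Set α} {c : ℝ≥0∞}
    (h : ∀ y, μ (φ ⁻¹' {y} ∩ T) = c * μ (φ ⁻¹' {y} ∩ S)) : μ T = c * μ S := by
  have sum_fibers (U : Set α) : μ U = ∑ y, μ (φ ⁻¹' {y} ∩ U) := by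
    simpa [Measure.restrict_apply (hφ _)] using
      (sum_measure_preimage_singleton (μ := μ.restrict U) Finset.univ fun y _ ↦ hφ y).symm
  rw [sum_fibers T, sum_fibers S, Finset.mul_sum]
  exact Finset.sum_congr rfl fun y _ ↦ h y

theorem AddMonoidHom.card_fiber_mul_card {G M : Type*} [AddGroup G] [Fintype G] [AddGroup M]
    [Fintype M] [DecidableEq M] (f : G →+ M) (hf : Function.Surjective f) (b : M) :
    (Finset.univ.filter fun g ↦ f g = b).card * Fintype.card M = Fintype.card G := by
  calc (Finset.univ.filter fun g ↦ f g = b).card * Fintype.card M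
      = ∑ y : M, (Finset.univ.filter fun g ↦ f g = y).card := by
        rw [Finset.sum_congr rfl fun y _ ↦ AddMonoidHom.card_fiber_eq_of_mem_range f (hf y) (hf b),
          Finset.sum_const, Finset.card_univ, smul_eq_mul, mul_comm]
    _ = Fintype.card G :=
        (Finset.card_eq_sum_card_fiberwise fun _ _ ↦ Finset.mem_univ _).symm

theorem Matrix.surjective_mulVec_of_rank_eq_card {m n K : Type*} [Fintype m] [Fintype n] [Field K]
    {M : Matrix m n K} (hM : M.rank = Fintype.card m) : Function.Surjective M.mulVec := by
  have : LinearMap.range M.mulVecLin = ⊤ :=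
    Submodule.eq_top_of_finrank_eq (by rw [← Matrix.rank, hM, Module.finrank_fintype_fun_eq_card])
  exact LinearMap.range_eq_top.1 this

theorem Matrix.surjective_mulVec_submatrix {l m n R : Type*} [Fintype n] [Semiring R]
    {M : Matrix m n R} (hM : Function.Surjective M.mulVec) {e : l → m} (he : e.Injective) :
    Function.Surjective (M.submatrix e id).mulVec := by
  intro b
  obtain ⟨t, ht⟩ := hM (Function.extend e b 0)
  refine ⟨t, funext fun s ↦ ?_⟩
  simpa [ht, he.extend_apply] using congrFun (M.submatrix_mulVec_equiv t e (Equiv.refl n)) s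

theorem MvPolynomial.exists_eval_add_smul_eq {R σ : Type*} [CommRing R] [Fintype σ]
    (f : MvPolynomial σ R) (x τ : σ → R) (c : R) :
    ∃ r, eval (x + c • τ) f = eval x f + c * ∑ i, τ i * eval x (pderiv i f) + c ^ 2 * r := by
  classical
  induction f using MvPolynomial.induction_on with
  | C a => exact ⟨0, by simp⟩
  | add f g hf hg =>
    obtain ⟨r₁, h₁⟩ := hf
    obtain ⟨r₂, h₂⟩ := hg
    exact ⟨r₁ + r₂, by simp only [map_add, h₁, h₂, mul_add, Finset.sum_add_distrib]; ring⟩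
  | mul_X f j hf =>
    obtain ⟨r, hr⟩ := hf
    refine ⟨(∑ i, τ i * eval x (pderiv i f)) * τ j + r * x j + c * r * τ j, ?_⟩
    have sum_pderiv : ∑ i, τ i * eval x (pderiv i (f * X j))
        = (∑ i, τ i * eval x (pderiv i f)) * x j + τ j * eval x f := by
      simp [pderiv_X, Pi.single_apply, mul_add, Finset.sum_add_distrib, Finset.mul_sum,
        apply_ite, mul_comm, mul_left_comm, add_comm]
    rw [sum_pderiv, map_mul, map_mul, hr]
    simp only [eval_X, Pi.add_apply, Pi.smul_apply, smul_eq_mul]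
    ring

namespace PadicInt

variable {p : ℕ} [Fact p.Prime]

theorem pow_dvd_iff_toZModPow_eq_zero (m : ℕ) (z : ℤ_[p]) :
    (p : ℤ_[p]) ^ m ∣ z ↔ toZModPow m z = 0 := by
  rw [← RingHom.mem_ker, ker_toZModPow, Ideal.mem_span_singleton]

theorem dvd_iff_toZMod_eq_zero (z : ℤ_[p]) : (p : ℤ_[p]) ∣ z ↔ toZMod z = 0 := by
  rw [← RingHom.mem_ker, ker_toZMod, maximalIdeal_eq_span_p, Ideal.mem_span_singleton]

theorem pow_succ_dvd_pow_mul_iff (m : ℕ) (z : ℤ_[p]) :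
    (p : ℤ_[p]) ^ (m + 1) ∣ p ^ m * z ↔ (p : ℤ_[p]) ∣ z := by
  rw [pow_succ,
    mul_dvd_mul_iff_left (pow_ne_zero m (Nat.cast_ne_zero.2 (Fact.out : p.Prime).ne_zero))]

variable {σ : Type*}

noncomputable def piToZModPow (m : ℕ) : (σ → ℤ_[p]) →+* (σ → ZMod (p ^ m)) :=
  (toZModPow m).compLeft σ

@[simp]
theorem piToZModPow_apply (m : ℕ) (x : σ → ℤ_[p]) (i : σ) :
    piToZModPow m x i = toZModPow m (x i) := rfl

theorem piToZModPow_eq_iff {m : ℕ} {x y : σ → ℤ_[p]} :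
    piToZModPow m x = piToZModPow m y ↔ ∀ i, (p : ℤ_[p]) ^ m ∣ x i - y i := by
  simp only [funext_iff, piToZModPow_apply, pow_dvd_iff_toZModPow_eq_zero, map_sub, sub_eq_zero]

theorem piToZModPow_eq_of_le {m m' : ℕ} (h : m ≤ m') {x y : σ → ℤ_[p]}
    (hxy : piToZModPow m' x = piToZModPow m' y) : piToZModPow m x = piToZModPow m y :=
  piToZModPow_eq_iff.2 fun i ↦ (pow_dvd_pow _ h).trans (piToZModPow_eq_iff.1 hxy i)

theorem piToZModPow_surjective (m : ℕ) : Function.Surjective (piToZModPow (p := p) (σ := σ) m) :=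
  fun c ↦ ⟨fun i ↦ (c i).cast, funext fun i ↦ ZMod.ringHom_map_cast (toZModPow m) (c i)⟩

theorem toZModPow_eval (m : ℕ) (x : σ → ℤ_[p]) (f : MvPolynomial σ ℤ_[p]) :
    toZModPow m (eval x f) = eval (piToZModPow m x) (map (toZModPow m) f) :=
  map_eval _ _ _

def IsDeterminedMod (m : ℕ) (P : Set (σ → ℤ_[p])) : Prop :=
  ∀ ⦃x y⦄, piToZModPow m x = piToZModPow m y → x ∈ P → y ∈ P

theorem IsDeterminedMod.mono {m m' : ℕ} {P : Set (σ → ℤ_[p])} (hP : IsDeterminedMod m P)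
    (h : m ≤ m') : IsDeterminedMod m' P :=
  fun _ _ hxy ↦ hP (piToZModPow_eq_of_le h hxy)

theorem IsDeterminedMod.inter {m : ℕ} {P Q : Set (σ → ℤ_[p])} (hP : IsDeterminedMod m P)
    (hQ : IsDeterminedMod m Q) : IsDeterminedMod m (P ∩ Q) :=
  fun _ _ hxy hx ↦ ⟨hP hxy hx.1, hQ hxy hx.2⟩

theorem isDeterminedMod_piToZModPow_preimage (m : ℕ) (s : Set (σ → ZMod (p ^ m))) :
    IsDeterminedMod m (piToZModPow m ⁻¹' s) :=
  fun _ _ hxy hx ↦ by rwa [Set.mem_preimage, ← hxy]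

variable {ε : Type*}

def zeroLocusModPow (F : ε → MvPolynomial σ ℤ_[p]) (m : ℕ) : Set (σ → ℤ_[p]) :=
  {x | ∀ s, (p : ℤ_[p]) ^ m ∣ eval x (F s)}

theorem zeroLocusModPow_succ_subset (F : ε → MvPolynomial σ ℤ_[p]) (m : ℕ) :
    zeroLocusModPow F (m + 1) ⊆ zeroLocusModPow F m :=
  fun _ hx s ↦ (pow_dvd_pow _ m.le_succ).trans (hx s)

theorem isDeterminedMod_zeroLocusModPow (F : ε → MvPolynomial σ ℤ_[p]) (m : ℕ) :
    IsDeterminedMod m (zeroLocusModPow F m) := by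
  intro x y hxy hx s
  rw [pow_dvd_iff_toZModPow_eq_zero, toZModPow_eval, ← hxy, ← toZModPow_eval,
    ← pow_dvd_iff_toZModPow_eq_zero]
  exact hx s

noncomputable def jacobianModP (F : ε → MvPolynomial σ ℤ_[p]) (x : σ → ℤ_[p]) :
    Matrix ε σ (ZMod p) :=
  Matrix.of fun s i ↦ toZMod (eval x (pderiv i (F s)))

theorem jacobianModP_eq_of_dvd_sub (F : ε → MvPolynomial σ ℤ_[p]) {x y : σ → ℤ_[p]}
    (hxy : ∀ i, (p : ℤ_[p]) ∣ x i - y i) : jacobianModP F x = jacobianModP F y := by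
  have : toZMod ∘ x = toZMod ∘ y :=
    funext fun i ↦ sub_eq_zero.1 (by simpa using (dvd_iff_toZMod_eq_zero _).1 (hxy i))
  ext s i
  simp only [jacobianModP, Matrix.of_apply, map_eval, this]

/-- The points `addDigit m x₀ t`, `t ∈ (ZMod p)^σ`, represent the residue classes modulo `p^(m+1)`
inside the residue class of `x₀` modulo `p^m`. -/
noncomputable def addDigit (m : ℕ) (x₀ : σ → ℤ_[p]) (t : σ → ZMod p) : σ → ℤ_[p] :=
  x₀ + (p : ℤ_[p]) ^ m • fun i ↦ (t i).cast

theorem piToZModPow_addDigit (m : ℕ) (x₀ : σ → ℤ_[p]) (t : σ → ZMod p) :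
    piToZModPow m (addDigit m x₀ t) = piToZModPow m x₀ :=
  piToZModPow_eq_iff.2 fun i ↦ by simp [addDigit]

theorem exists_piToZModPow_succ_eq_addDigit {m : ℕ} {x x₀ : σ → ℤ_[p]}
    (hx : piToZModPow m x = piToZModPow m x₀) :
    ∃ t, piToZModPow (m + 1) x = piToZModPow (m + 1) (addDigit m x₀ t) := by
  choose τ hτ using piToZModPow_eq_iff.1 hx
  refine ⟨toZMod ∘ τ, piToZModPow_eq_iff.2 fun i ↦ ?_⟩
  rw [show x i - addDigit m x₀ (toZMod ∘ τ) i = p ^ m * (τ i - (toZMod (τ i)).cast) by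
      simp only [addDigit, Pi.add_apply, Pi.smul_apply, smul_eq_mul, Function.comp_apply]
      linear_combination hτ i,
    pow_succ_dvd_pow_mul_iff, dvd_iff_toZMod_eq_zero, map_sub, ZMod.ringHom_map_cast, sub_self]

theorem piToZModPow_succ_addDigit_injective (m : ℕ) (x₀ : σ → ℤ_[p]) :
    Function.Injective fun t ↦ piToZModPow (m + 1) (addDigit m x₀ t) := by
  intro t t' h
  funext i
  have := piToZModPow_eq_iff.1 h i
  rwa [show addDigit m x₀ t i - addDigit m x₀ t' i = p ^ m * ((t i).cast - (t' i).cast) by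
      simp [addDigit]; ring,
    pow_succ_dvd_pow_mul_iff, dvd_iff_toZMod_eq_zero, map_sub, ZMod.ringHom_map_cast,
    ZMod.ringHom_map_cast, sub_eq_zero] at this

variable [Fintype σ]

theorem addDigit_mem_zeroLocusModPow_succ_iff {F : ε → MvPolynomial σ ℤ_[p]} {m : ℕ} (hm : 1 ≤ m)
    {x₀ : σ → ℤ_[p]} {u : ε → ℤ_[p]} (hu : ∀ s, eval x₀ (F s) = p ^ m * u s) (t : σ → ZMod p) :
    addDigit m x₀ t ∈ zeroLocusModPow F (m + 1) ↔ (jacobianModP F x₀).mulVec t = -(toZMod ∘ u) := by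
  rw [funext_iff]
  refine forall_congr' fun s ↦ ?_
  obtain ⟨r, hr⟩ := (F s).exists_eval_add_smul_eq x₀ (fun i ↦ (t i).cast) ((p : ℤ_[p]) ^ m)
  have taylor : eval (addDigit m x₀ t) (F s) = p ^ m * (u s + ∑ i, (t i).cast *
      eval x₀ (pderiv i (F s))) + p ^ (m + 1) * (p ^ (m - 1) * r) := by
    rw [addDigit, hr, hu, ← mul_assoc, ← pow_add, ← pow_mul, show m + 1 + (m - 1) = m * 2 by omega]
    ring
  rw [taylor, dvd_add_left (dvd_mul_right _ _), pow_succ_dvd_pow_mul_iff, dvd_iff_toZMod_eq_zero]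
  simp [Matrix.mulVec, dotProduct, jacobianModP, map_sum, mul_comm, eq_neg_iff_add_eq_zero,
    add_comm]

theorem piToZModPow_preimage_inter_zeroLocusModPow_succ [DecidableEq σ] [Fintype ε]
    {F : ε → MvPolynomial σ ℤ_[p]} {m : ℕ} (hm : 1 ≤ m) {x₀ : σ → ℤ_[p]} {u : ε → ℤ_[p]}
    (hu : ∀ s, eval x₀ (F s) = p ^ m * u s) :
    piToZModPow m ⁻¹' {piToZModPow m x₀} ∩ zeroLocusModPow F (m + 1) =
      piToZModPow (m + 1) ⁻¹' ((Finset.univ.filter fun t ↦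
        (jacobianModP F x₀).mulVec t = -(toZMod ∘ u)).image fun t ↦
          piToZModPow (m + 1) (addDigit m x₀ t)) := by
  ext x
  simp only [Set.mem_inter_iff, Set.mem_preimage, Set.mem_singleton_iff, Finset.coe_image,
    Finset.coe_filter, Set.mem_image, Set.mem_ofPred_eq, Finset.mem_univ, true_and,
    ← addDigit_mem_zeroLocusModPow_succ_iff hm hu]
  constructor
  · rintro ⟨hx, hxF⟩
    obtain ⟨t, ht⟩ := exists_piToZModPow_succ_eq_addDigit hx
    exact ⟨t, isDeterminedMod_zeroLocusModPow F (m + 1) ht hxF, ht.symm⟩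
  · rintro ⟨t, htF, ht⟩
    exact ⟨(piToZModPow_eq_of_le m.le_succ ht.symm).trans (piToZModPow_addDigit m x₀ t),
      isDeterminedMod_zeroLocusModPow F (m + 1) ht htF⟩

theorem measurableSet_piToZModPow_preimage_singleton (m : ℕ) (y : σ → ZMod (p ^ m)) :
    MeasurableSet (piToZModPow m ⁻¹' {y}) := by
  obtain ⟨x, rfl⟩ := piToZModPow_surjective m y
  have : piToZModPow m ⁻¹' {piToZModPow m x} =
      Set.univ.pi fun i ↦ Metric.closedBall (x i) ((p : ℝ) ^ (-(m : ℤ))) := by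
    ext z
    simp only [Set.mem_preimage, Set.mem_singleton_iff, piToZModPow_eq_iff, Set.mem_pi,
      Set.mem_univ, true_implies, Metric.mem_closedBall, dist_eq_norm,
      norm_le_pow_iff_mem_span_pow, Ideal.mem_span_singleton]
  rw [this]
  exact MeasurableSet.univ_pi fun i ↦ measurableSet_closedBall

section Measure

variable (μ : Measure (σ → ℤ_[p])) [μ.IsAddLeftInvariant] [IsProbabilityMeasure μ]

theorem measure_piToZModPow_preimage_singleton (m : ℕ) (y : σ → ZMod (p ^ m)) :
    μ (piToZModPow m ⁻¹' {y}) = (p : ℝ≥0∞)⁻¹ ^ (m * Fintype.card σ) := by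
  obtain ⟨x, rfl⟩ := piToZModPow_surjective m y
  set H := (piToZModPow (p := p) (σ := σ) m : (σ → ℤ_[p]) →+ σ → ZMod (p ^ m)).ker
  have fiber_eq : piToZModPow m ⁻¹' {piToZModPow m x} = (fun z ↦ -x + z) ⁻¹' H := by
    ext z
    simp only [Set.mem_preimage, Set.mem_singleton_iff, SetLike.mem_coe, H, AddMonoidHom.mem_ker,
      map_add, map_neg]
    rw [neg_add_eq_zero, eq_comm]
    rfl
  have index_H : H.index = p ^ (m * Fintype.card σ) := by
    rw [AddSubgroup.index_ker, AddMonoidHom.range_eq_top.2 (piToZModPow_surjective m),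
      AddSubgroup.card_top, Nat.card_fun, Nat.card_zmod, ← pow_mul, Nat.card_eq_fintype_card]
  have : H.FiniteIndex := ⟨by rw [index_H]; exact pow_ne_zero _ (Fact.out : p.Prime).ne_zero⟩
  have := H.index_mul_measure (measurableSet_piToZModPow_preimage_singleton m 0) μ
  rw [measure_univ, index_H, mul_comm] at this
  rw [fiber_eq, measure_preimage_add, ENNReal.eq_inv_of_mul_eq_one_left this, Nat.cast_pow,
    ENNReal.inv_pow]

theorem measure_piToZModPow_preimage (m : ℕ) (s : Finset (σ → ZMod (p ^ m))) :
    μ (piToZModPow m ⁻¹' s) = s.card * (p : ℝ≥0∞)⁻¹ ^ (m * Fintype.card σ) := by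
  rw [← sum_measure_preimage_singleton s fun y _ ↦ measurableSet_piToZModPow_preimage_singleton m y]
  simp [measure_piToZModPow_preimage_singleton]

variable [Fintype ε]

theorem measure_piToZModPow_preimage_inter_zeroLocusModPow_succ {F : ε → MvPolynomial σ ℤ_[p]}
    {m : ℕ} (hm : 1 ≤ m) {x₀ : σ → ℤ_[p]} (hx₀ : x₀ ∈ zeroLocusModPow F m)
    (hJ : Function.Surjective (jacobianModP F x₀).mulVec) :
    μ (piToZModPow m ⁻¹' {piToZModPow m x₀} ∩ zeroLocusModPow F (m + 1)) =
      (p : ℝ≥0∞)⁻¹ ^ Fintype.card ε * μ (piToZModPow m ⁻¹' {piToZModPow m x₀}) := by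
  classical
  choose u hu using hx₀
  set L := Finset.univ.filter fun t ↦ (jacobianModP F x₀).mulVec t = -(toZMod ∘ u)
  have card_L : (L.card : ℝ≥0∞) * p ^ Fintype.card ε = p ^ Fintype.card σ := by
    have := (jacobianModP F x₀).mulVecLin.toAddMonoidHom.card_fiber_mul_card hJ (-(toZMod ∘ u))
    rw [Fintype.card_fun, Fintype.card_fun, ZMod.card] at this
    exact_mod_cast this
  have hp : (p : ℝ≥0∞) * (p : ℝ≥0∞)⁻¹ = 1 :=
    ENNReal.mul_inv_cancel (Nat.cast_ne_zero.2 (Fact.out : p.Prime).ne_zero)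
      (ENNReal.natCast_ne_top p)
  have card_L_mul : (L.card : ℝ≥0∞) * (p : ℝ≥0∞)⁻¹ ^ Fintype.card σ =
      (p : ℝ≥0∞)⁻¹ ^ Fintype.card ε :=
    calc (L.card : ℝ≥0∞) * (p : ℝ≥0∞)⁻¹ ^ Fintype.card σ
        = L.card * (p * (p : ℝ≥0∞)⁻¹) ^ Fintype.card ε * (p : ℝ≥0∞)⁻¹ ^ Fintype.card σ := by
          rw [hp, one_pow, mul_one]
      _ = (L.card * p ^ Fintype.card ε) * (p : ℝ≥0∞)⁻¹ ^ Fintype.card σ *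
            (p : ℝ≥0∞)⁻¹ ^ Fintype.card ε := by
          rw [mul_pow]; ring
      _ = (p : ℝ≥0∞)⁻¹ ^ Fintype.card ε := by rw [card_L, ← mul_pow, hp, one_pow, one_mul]
  rw [piToZModPow_preimage_inter_zeroLocusModPow_succ hm hu, measure_piToZModPow_preimage,
    Finset.card_image_of_injective _ (piToZModPow_succ_addDigit_injective m x₀),
    measure_piToZModPow_preimage_singleton, add_one_mul, pow_add, mul_left_comm, card_L_mul,
    mul_comm]

theorem measure_inter_zeroLocusModPow_succ {F : ε → MvPolynomial σ ℤ_[p]} {m : ℕ} (hm : 1 ≤ m)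
    {P : Set (σ → ℤ_[p])} (hP : IsDeterminedMod m P)
    (hJ : ∀ x ∈ P, Function.Surjective (jacobianModP F x).mulVec) :
    μ (P ∩ zeroLocusModPow F (m + 1)) =
      (p : ℝ≥0∞)⁻¹ ^ Fintype.card ε * μ (P ∩ zeroLocusModPow F m) := by
  classical
  refine measure_eq_mul_of_forall_fiber (measurableSet_piToZModPow_preimage_singleton m) fun y ↦ ?_
  by_cases hy : ∃ x₀ ∈ P ∩ zeroLocusModPow F m, piToZModPow m x₀ = y
  · obtain ⟨x₀, ⟨hx₀P, hx₀⟩, rfl⟩ := hy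
    have fiber_subset : piToZModPow m ⁻¹' {piToZModPow m x₀} ⊆ P ∩ zeroLocusModPow F m :=
      fun x hx ↦ hP.inter (isDeterminedMod_zeroLocusModPow F m) hx.symm ⟨hx₀P, hx₀⟩
    rw [Set.inter_eq_left.2 fiber_subset, ← Set.inter_assoc,
      Set.inter_eq_left.2 fun x hx ↦ (fiber_subset hx).1]
    exact measure_piToZModPow_preimage_inter_zeroLocusModPow_succ μ hm hx₀ (hJ x₀ hx₀P)
  · have empty : piToZModPow m ⁻¹' {y} ∩ (P ∩ zeroLocusModPow F m) = ∅ :=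
      Set.eq_empty_of_forall_notMem fun x ⟨hxy, hx⟩ ↦ hy ⟨x, hx, hxy⟩
    have empty_succ : piToZModPow m ⁻¹' {y} ∩ (P ∩ zeroLocusModPow F (m + 1)) = ∅ :=
      Set.subset_eq_empty (Set.inter_subset_inter_right _
        (Set.inter_subset_inter_right _ (zeroLocusModPow_succ_subset F m))) empty
    rw [empty, empty_succ, measure_empty, mul_zero]

theorem measure_inter_zeroLocusModPow_add {F : ε → MvPolynomial σ ℤ_[p]} {m : ℕ} (hm : 1 ≤ m)
    {P : Set (σ → ℤ_[p])} (hP : IsDeterminedMod m P)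
    (hJ : ∀ x ∈ P, Function.Surjective (jacobianModP F x).mulVec) (d : ℕ) :
    μ (P ∩ zeroLocusModPow F (m + d)) =
      (p : ℝ≥0∞)⁻¹ ^ (Fintype.card ε * d) * μ (P ∩ zeroLocusModPow F m) := by
  induction d with
  | zero => simp
  | succ d ih =>
    rw [← add_assoc, measure_inter_zeroLocusModPow_succ μ (by omega) (hP.mono (by omega)) hJ, ih,
      ← mul_assoc, ← pow_add, mul_add_one, add_comm]

theorem measure_inter_zeroLocusModPow_pair {f g : MvPolynomial σ ℤ_[p]} {k l : ℕ} (hl : 1 ≤ l)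
    (hlk : l ≤ k) {P : Set (σ → ℤ_[p])} (hP : IsDeterminedMod 1 P)
    (hPfg : P ⊆ zeroLocusModPow ![f, g] 1)
    (hJ : ∀ x ∈ P, Function.Surjective (jacobianModP ![f, g] x).mulVec) :
    μ (P ∩ zeroLocusModPow ![f, g] l ∩ zeroLocusModPow (fun _ : Unit ↦ f) k) =
      (p : ℝ≥0∞)⁻¹ ^ (k - l + 2 * (l - 1)) * μ P := by
  have both_to_l := measure_inter_zeroLocusModPow_add μ le_rfl hP hJ (l - 1)
  rw [Nat.add_sub_cancel' hl, Set.inter_eq_left.2 hPfg, Fintype.card_fin] at both_to_l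
  have hJf (x) (hx : x ∈ P ∩ zeroLocusModPow ![f, g] l) :
      Function.Surjective (jacobianModP (fun _ : Unit ↦ f) x).mulVec :=
    Matrix.surjective_mulVec_submatrix (hJ x hx.1) (e := fun _ ↦ 0)
      (Function.injective_of_subsingleton _)
  have f_to_k := measure_inter_zeroLocusModPow_add μ hl
    ((hP.mono hl).inter (isDeterminedMod_zeroLocusModPow _ l)) hJf (k - l)
  have f_at_l : P ∩ zeroLocusModPow ![f, g] l ∩ zeroLocusModPow (fun _ : Unit ↦ f) l =
      P ∩ zeroLocusModPow ![f, g] l :=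
    Set.inter_eq_left.2 fun x hx _ ↦ hx.2 0
  rwa [Nat.add_sub_cancel' hlk, f_at_l, both_to_l, Fintype.card_unit, one_mul, ← mul_assoc,
    ← pow_add] at f_to_k

end Measure

end PadicInt

open PadicInt

instance (p : ℕ) [Fact p.Prime] (n : ℕ) : (padicHaar p n).IsAddLeftInvariant := by
  unfold padicHaar; infer_instance

instance (p : ℕ) [Fact p.Prime] (n : ℕ) : IsProbabilityMeasure (padicHaar p n) :=
  ⟨Measure.addHaarMeasure_self⟩

theorem measure_Akl_general (p : ℕ) [Fact p.Prime] (n : ℕ)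
    (f g : MvPolynomial (Fin n) ℤ_[p]) (k l : ℕ) (hk : 1 ≤ l) (hkl : l ≤ k)
    (a : Fin n → ℤ_[p])
    (hfa : (p : ℤ_[p]) ∣ eval a f) (hga : (p : ℤ_[p]) ∣ eval a g)
    (hrank : Matrix.rank (Matrix.of fun (i : Fin 2) (j : Fin n) =>
      PadicInt.toZMod (eval a (pderiv j (![f, g] i)))) = 2) :
    padicHaar p n {x : Fin n → ℤ_[p] | (∀ i, (p : ℤ_[p]) ∣ (x i - a i)) ∧
        (p : ℤ_[p]) ^ k ∣ eval x f ∧ (p : ℤ_[p]) ^ l ∣ eval x g}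
      = (p : ENNReal) ^ (-(n : ℤ) - (k : ℤ) - (l : ℤ) + 2) := by
  set P₀ : Set (Fin n → ℤ_[p]) := piToZModPow 1 ⁻¹' {piToZModPow 1 a}
  have mem_P₀ (x) : x ∈ P₀ ↔ ∀ i, (p : ℤ_[p]) ∣ x i - a i := by simp [P₀, piToZModPow_eq_iff]
  have hJ (x) (hx : x ∈ P₀) : Function.Surjective (jacobianModP ![f, g] x).mulVec := by
    rw [jacobianModP_eq_of_dvd_sub _ ((mem_P₀ x).1 hx)]
    exact Matrix.surjective_mulVec_of_rank_eq_card hrank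
  have P₀_subset : P₀ ⊆ zeroLocusModPow ![f, g] 1 := fun x hx ↦
    isDeterminedMod_zeroLocusModPow _ 1 hx.symm
      (by simpa [zeroLocusModPow, Fin.forall_fin_two] using ⟨hfa, hga⟩)
  have A_eq : {x : Fin n → ℤ_[p] | (∀ i, (p : ℤ_[p]) ∣ (x i - a i)) ∧
      (p : ℤ_[p]) ^ k ∣ eval x f ∧ (p : ℤ_[p]) ^ l ∣ eval x g} =
      P₀ ∩ zeroLocusModPow ![f, g] l ∩ zeroLocusModPow (fun _ : Unit ↦ f) k := by
    ext x
    simp only [Set.mem_inter_iff, mem_P₀, zeroLocusModPow, Set.mem_ofPred_eq, Fin.forall_fin_two,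
      Matrix.cons_val_zero, Matrix.cons_val_one, forall_const]
    exact ⟨fun ⟨ha, hf, hg⟩ ↦ ⟨⟨ha, (pow_dvd_pow _ hkl).trans hf, hg⟩, hf⟩,
      fun ⟨⟨ha, _, hg⟩, hf⟩ ↦ ⟨ha, hf, hg⟩⟩
  rw [A_eq, measure_inter_zeroLocusModPow_pair _ hk hkl (isDeterminedMod_piToZModPow_preimage 1 _)
    P₀_subset hJ, measure_piToZModPow_preimage_singleton, one_mul, Fintype.card_fin, ← pow_add,
    ← ENNReal.inv_pow, ← zpow_natCast, ← ENNReal.zpow_neg]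
  congr 1
  omega

theorem measure_Akl (p : ℕ) [Fact p.Prime] (n : ℕ) (hn : 2 ≤ n)
    (f g : MvPolynomial (Fin n) ℤ_[p]) (k l : ℕ) (hk : 1 ≤ l) (hkl : l ≤ k)
    (a : Fin n → ℤ_[p])
    (hfa : (p : ℤ_[p]) ∣ eval a f) (hga : (p : ℤ_[p]) ∣ eval a g)
    (hrank : Matrix.rank (Matrix.of fun (i : Fin 2) (j : Fin n) =>
      PadicInt.toZMod (eval a (pderiv j (![f, g] i)))) = 2) :
    padicHaar p n {x : Fin n → ℤ_[p] | (∀ i, (p : ℤ_[p]) ∣ (x i - a i)) ∧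
        (p : ℤ_[p]) ^ k ∣ eval x f ∧ (p : ℤ_[p]) ^ l ∣ eval x g}
      = (p : ENNReal) ^ (-(n : ℤ) - (k : ℤ) - (l : ℤ) + 2) :=
  measure_Akl_general p n f g k l hk hkl a hfa hga hrank
end

section
/- Let p be a prime, n ≥ 2, and f, g ∈ ℤ_p[x_1,…,x_n]. Let a ∈ ℤ_p^n be such that f(a) ≡ 0 mod p, g(a) ≡ 0 mod p, and the 2×n Jacobian matrix with rows (∂f/∂x_1(a),…,∂f/∂x_n(a)) and (∂g/∂x_1(a),…,∂g/∂x_n(a)) has rank 2 modulo p. Then for all positive integers k and l, the set {x ∈ a + (pℤ_p)^n : ord f(x) = k and ord g(x) = l} has Haar measure p^{−n−k−l}(p−1)^2. -/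
open MeasureTheory MvPolynomial

/-! Write `A(s, t)` for the set of `x ∈ a + (pℤ_p)^n` with `p^s ∣ f(x)` and `p^t ∣ g(x)`. The rank
condition gives `v, w ∈ ℤ_p^n` with `(∇f(a)·v, ∇g(a)·v) ≡ (1, 0)` and `(∇f(a)·w, ∇g(a)·w) ≡ (0, 1)`
modulo `p`. For `x ∈ a + (pℤ_p)^n` and `s ≥ 1`, Taylor expansion gives
`f(x + p^s r v) ≡ f(x) + p^s r` and `g(x + p^s r v) ≡ g(x)` modulo `p^(s+1)`. Hence, if `t ≤ s + 1`,
`A(s, t)` is the disjoint union of the translates of `A(s + 1, t)` by `p^s j v`, `j ∈ ZMod p`, and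
`μ A(s, t) = p μ A(s + 1, t)`. Reducing the larger index each time (using `w` for `g`), this gives
`μ A(s, t) = p^(2-n-s-t)` starting from `A(1, 1) = a + (pℤ_p)^n`. The set of the theorem is
`A(k, l) \ (A(k+1, l) ∪ A(k, l+1))`, and inclusion–exclusion finishes the computation. -/

open scoped ENNReal

namespace MvPolynomial

variable {R σ : Type*} [CommRing R]

theorem dvd_eval_sub_eval {c : R} {x y : σ → R} (h : ∀ i, c ∣ x i - y i)
    (f : MvPolynomial σ R) : c ∣ eval x f - eval y f := by
  simp_rw [← Ideal.mem_span_singleton, ← Ideal.Quotient.eq] at h ⊢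
  simp only [eval, coe_eval₂Hom, eval₂_comp_left, Function.comp_def, h]

theorem sq_dvd_eval_add_smul_sub [Fintype σ] (c : R) (x v : σ → R) (f : MvPolynomial σ R) :
    c ^ 2 ∣ eval (x + c • v) f - eval x f - c * ∑ j, v j * eval x (pderiv j f) := by
  classical
  induction f using MvPolynomial.induction_on with
  | C r => simp
  | add f g hf hg =>
    convert dvd_add hf hg using 1
    simp only [map_add, mul_add, Finset.sum_add_distrib]
    ring
  | mul_X f i hf =>
    obtain ⟨E, hE⟩ := hf
    obtain ⟨u, hu⟩ := dvd_eval_sub_eval (c := c) (x := x + c • v) (y := x)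
      (fun i => ⟨v i, by simp only [Pi.add_apply, Pi.smul_apply, smul_eq_mul]; ring⟩) f
    have hsum : ∑ j, v j * eval x (pderiv j (f * X i))
        = (∑ j, v j * eval x (pderiv j f)) * x i + v i * eval x f := by
      simp [pderiv_X, Pi.single_apply, mul_add, Finset.sum_add_distrib, Finset.mul_sum,
        apply_ite (eval x), mul_left_comm _ (x i), mul_comm _ (x i), add_comm]
    refine ⟨E * x i + v i * u, ?_⟩
    simp only [eval_mul, eval_X, hsum, Pi.add_apply, Pi.smul_apply, smul_eq_mul]
    linear_combination x i * hE + c * v i * hu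

theorem pow_succ_dvd_eval_add_smul_sub [Fintype σ] {π δ : R} {a y v : σ → R}
    {f : MvPolynomial σ R} (hy : ∀ i, π ∣ y i - a i)
    (hv : π ∣ ∑ j, v j * eval a (pderiv j f) - δ) {s : ℕ} (hs : 1 ≤ s) (r : R) :
    π ^ (s + 1) ∣ eval (y + (π ^ s * r) • v) f - eval y f - π ^ s * r * δ := by
  have hT := sq_dvd_eval_add_smul_sub (π ^ s) y (r • v) f
  simp only [Pi.smul_apply, smul_eq_mul, mul_assoc, ← Finset.mul_sum, ← mul_smul] at hT
  have hD : π ∣ ∑ j, v j * eval y (pderiv j f) - δ := by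
    convert dvd_add (Finset.dvd_sum fun j _ =>
      (dvd_eval_sub_eval hy (pderiv j f)).mul_left (v j)) hv using 1
    simp only [mul_sub, Finset.sum_sub_distrib]
    ring
  have hsq : π ^ (s + 1) ∣ (π ^ s) ^ 2 := by
    rw [← pow_mul]
    exact pow_dvd_pow π (by omega)
  have hlin : π ^ (s + 1) ∣ π ^ s * r * (∑ j, v j * eval y (pderiv j f) - δ) := by
    rw [pow_succ, mul_assoc]
    exact mul_dvd_mul_left _ (hD.mul_left r)
  convert dvd_add (hsq.trans hT) hlin using 1
  ring

end MvPolynomial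

theorem Matrix.exists_mulVec_eq_of_rank_eq {K m ι : Type*} [Field K] [Fintype m] [Fintype ι]
    (M : Matrix m ι K) (h : M.rank = Fintype.card m) (t : m → K) : ∃ u, M.mulVec u = t := by
  have htop : LinearMap.range M.mulVecLin = ⊤ := by
    apply Submodule.eq_top_of_finrank_eq
    rw [show Module.finrank K (LinearMap.range M.mulVecLin) = M.rank from rfl, h,
      Module.finrank_fintype_fun_eq_card]
  exact LinearMap.range_eq_top.mp htop t

theorem MeasureTheory.measure_iUnion_preimage_add {G ι : Type*} [AddGroup G] [MeasurableSpace G]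
    [MeasurableAdd G] [Fintype ι] (μ : Measure G) [μ.IsAddLeftInvariant] {T : Set G}
    (hT : MeasurableSet T) (d : ι → G)
    (hd : Pairwise (Function.onFun Disjoint fun j => (d j + ·) ⁻¹' T)) :
    μ (⋃ j, (d j + ·) ⁻¹' T) = Fintype.card ι * μ T := by
  rw [measure_iUnion hd fun j => measurable_const_add (d j) hT, tsum_fintype]
  simp [measure_preimage_add]

theorem MeasureTheory.measure_sdiff_union_add_add {α : Type*} [MeasurableSpace α] (μ : Measure α)
    {A B C : Set α} (hB : B ⊆ A) (hC : C ⊆ A) (hBm : MeasurableSet B) (hCm : MeasurableSet C) :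
    μ (A \ (B ∪ C)) + μ B + μ C = μ A + μ (B ∩ C) := by
  have hA : A ∩ (B ∪ C) = B ∪ C := Set.inter_eq_right.mpr (Set.union_subset hB hC)
  rw [add_assoc, ← measure_union_add_inter B hCm, ← add_assoc,
    ← measure_sdiff_add_inter A (hBm.union hCm), hA]

theorem ENNReal.eq_zpow_mul_sub_one_sq {q : ℕ} (hq : q ≠ 0) {e : ℤ} {X : ℝ≥0∞}
    (h : X + (q : ℝ≥0∞) ^ (e + 1) + (q : ℝ≥0∞) ^ (e + 1) = (q : ℝ≥0∞) ^ (e + 2) + (q : ℝ≥0∞) ^ e) :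
    X = (q : ℝ≥0∞) ^ e * ((q : ℝ≥0∞) - 1) ^ 2 := by
  have hq0 : (q : ℝ≥0∞) ≠ 0 := Nat.cast_ne_zero.mpr hq
  have hqt : (q : ℝ≥0∞) ≠ ⊤ := ENNReal.natCast_ne_top q
  have hpoly : ((q : ℝ≥0∞) - 1) ^ 2 + q + q = q ^ 2 + 1 := by
    obtain ⟨m, rfl⟩ := Nat.exists_eq_succ_of_ne_zero hq
    push_cast
    rw [ENNReal.add_sub_cancel_right ENNReal.one_ne_top]
    ring
  simp only [ENNReal.zpow_add hq0 hqt, zpow_one, zpow_two, add_assoc] at h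
  refine (ENNReal.add_left_inj (a := (q : ℝ≥0∞) ^ e * q + (q : ℝ≥0∞) ^ e * q)
    (by finiteness)).mp (h.trans ?_)
  calc (q : ℝ≥0∞) ^ e * (q * q) + (q : ℝ≥0∞) ^ e = (q : ℝ≥0∞) ^ e * (q ^ 2 + 1) := by ring
    _ = (q : ℝ≥0∞) ^ e * (((q : ℝ≥0∞) - 1) ^ 2 + q + q) := by rw [hpoly]
    _ = _ := by ring

namespace PadicInt

variable {p : ℕ} [Fact p.Prime]

theorem p_dvd_iff_toZMod_eq_zero (x : ℤ_[p]) : (p : ℤ_[p]) ∣ x ↔ toZMod x = 0 := by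
  rw [← Ideal.mem_span_singleton, ← maximalIdeal_eq_span_p, ← ker_toZMod, RingHom.mem_ker]

theorem toZMod_natCast_val (j : ZMod p) : toZMod (j.val : ℤ_[p]) = j := by
  rw [map_natCast, ZMod.natCast_val, ZMod.cast_id]

theorem p_dvd_sub_natCast_val_toZMod (x : ℤ_[p]) : (p : ℤ_[p]) ∣ x - (toZMod x).val := by
  rw [p_dvd_iff_toZMod_eq_zero, map_sub, toZMod_natCast_val, sub_self]

theorem eq_of_p_dvd_natCast_val_sub {j j' : ZMod p} (h : (p : ℤ_[p]) ∣ j.val - j'.val) :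
    j = j' := by
  rwa [p_dvd_iff_toZMod_eq_zero, map_sub, toZMod_natCast_val, toZMod_natCast_val,
    sub_eq_zero] at h

theorem pow_dvd_iff_norm_le (k : ℕ) (x : ℤ_[p]) :
    (p : ℤ_[p]) ^ k ∣ x ↔ ‖x‖ ≤ (p : ℝ) ^ (-(k : ℤ)) := by
  rw [norm_le_pow_iff_mem_span_pow, Ideal.mem_span_singleton]

theorem norm_eq_zpow_neg_iff (k : ℕ) (x : ℤ_[p]) :
    ‖x‖ = (p : ℝ) ^ (-(k : ℤ)) ↔ (p : ℤ_[p]) ^ k ∣ x ∧ ¬(p : ℤ_[p]) ^ (k + 1) ∣ x := by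
  have h := (norm_lt_pow_iff_norm_le_pow_sub_one x (-k)).not
  rw [not_lt, not_le] at h
  rw [pow_dvd_iff_norm_le, pow_dvd_iff_norm_le, not_le, Nat.cast_succ, neg_add,
    ← sub_eq_add_neg, ← h, le_antisymm_iff]

theorem isClosed_setOf_pow_dvd (k : ℕ) : IsClosed {x : ℤ_[p] | (p : ℤ_[p]) ^ k ∣ x} := by
  simp only [pow_dvd_iff_norm_le]
  exact isClosed_le continuous_norm continuous_const

theorem isClosed_setOf_dvd : IsClosed {x : ℤ_[p] | (p : ℤ_[p]) ∣ x} := by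
  simpa using isClosed_setOf_pow_dvd (p := p) 1

end PadicInt

instance inst_s6 (p : ℕ) [Fact p.Prime] (n : ℕ) : (padicHaar p n).IsAddLeftInvariant := by
  unfold padicHaar; infer_instance

theorem padicHaar_univ (p : ℕ) [Fact p.Prime] (n : ℕ) : padicHaar p n Set.univ = 1 :=
  Measure.addHaarMeasure_self

theorem pow_mul_padicHaar_coset (p : ℕ) [Fact p.Prime] (n : ℕ) (a : Fin n → ℤ_[p]) :
    (p : ℝ≥0∞) ^ n * padicHaar p n {x | ∀ i, (p : ℤ_[p]) ∣ x i - a i} = 1 := by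
  set H := ((PadicInt.toZMod : ℤ_[p] →+* ZMod p).toAddMonoidHom.compLeft (Fin n)).ker
  have hH : (H : Set (Fin n → ℤ_[p])) = {x | ∀ i, (p : ℤ_[p]) ∣ x i} := by
    ext x
    simp [H, funext_iff, PadicInt.p_dvd_iff_toZMod_eq_zero]
  have hindex : H.index = p ^ n := by
    rw [AddSubgroup.index_ker, AddMonoidHom.range_eq_top.mpr
      (ZMod.ringHom_surjective PadicInt.toZMod).comp_left, AddSubgroup.card_top]
    simp
  have hclosed : IsClosed (H : Set (Fin n → ℤ_[p])) := by
    rw [hH, Set.ofPred_forall]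
    exact isClosed_iInter fun i => PadicInt.isClosed_setOf_dvd.preimage
      (continuous_apply i : Continuous fun x : Fin n → ℤ_[p] => x i)
  have hcoset : {x | ∀ i, (p : ℤ_[p]) ∣ x i - a i} = (-a + ·) ⁻¹' H := by
    ext x
    simp [hH, neg_add_eq_sub]
  have := AddSubgroup.index_mul_measure H hclosed.measurableSet (padicHaar p n)
  rwa [hindex, padicHaar_univ, Nat.cast_pow, ← measure_preimage_add _ (-a), ← hcoset] at this

def levelSet (p : ℕ) [Fact p.Prime] {n : ℕ} (f g : MvPolynomial (Fin n) ℤ_[p])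
    (a : Fin n → ℤ_[p]) (s t : ℕ) : Set (Fin n → ℤ_[p]) :=
  {x | (∀ i, (p : ℤ_[p]) ∣ x i - a i) ∧ (p : ℤ_[p]) ^ s ∣ eval x f ∧ (p : ℤ_[p]) ^ t ∣ eval x g}

section LevelSet

variable {p : ℕ} [Fact p.Prime] {n : ℕ} {f g : MvPolynomial (Fin n) ℤ_[p]} {a : Fin n → ℤ_[p]}

theorem isClosed_levelSet (s t : ℕ) : IsClosed (levelSet p f g a s t) := by
  simp only [levelSet, Set.ofPred_and, Set.ofPred_forall]
  exact (isClosed_iInter fun i => PadicInt.isClosed_setOf_dvd.preimage (by fun_prop)).inter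
    (((PadicInt.isClosed_setOf_pow_dvd s).preimage (continuous_eval f)).inter
      ((PadicInt.isClosed_setOf_pow_dvd t).preimage (continuous_eval g)))

theorem levelSet_comm (s t : ℕ) : levelSet p g f a t s = levelSet p f g a s t := by
  ext x
  simp only [levelSet, Set.mem_ofPred_eq, and_comm (a := _ ∣ eval x g)]

theorem levelSet_anti {s s' t t' : ℕ} (hs : s ≤ s') (ht : t ≤ t') :
    levelSet p f g a s' t' ⊆ levelSet p f g a s t :=
  fun _ ⟨hx, hf, hg⟩ => ⟨hx, (pow_dvd_pow _ hs).trans hf, (pow_dvd_pow _ ht).trans hg⟩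

theorem levelSet_succ_inter_levelSet_succ (s t : ℕ) :
    levelSet p f g a (s + 1) t ∩ levelSet p f g a s (t + 1) = levelSet p f g a (s + 1) (t + 1) :=
  Set.Subset.antisymm (fun _ ⟨⟨hx, hf, _⟩, ⟨_, _, hg⟩⟩ => ⟨hx, hf, hg⟩)
    fun _ hx => ⟨levelSet_anti le_rfl (by omega) hx, levelSet_anti (by omega) le_rfl hx⟩

theorem levelSet_one_one (hfa : (p : ℤ_[p]) ∣ eval a f) (hga : (p : ℤ_[p]) ∣ eval a g) :
    levelSet p f g a 1 1 = {x | ∀ i, (p : ℤ_[p]) ∣ x i - a i} := by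
  refine Set.Subset.antisymm (fun _ hx => hx.1) fun x hx => ⟨hx, ?_, ?_⟩
  · simpa using dvd_add (dvd_eval_sub_eval hx f) hfa
  · simpa using dvd_add (dvd_eval_sub_eval hx g) hga

theorem setOf_norm_eq_eq_levelSet_sdiff (k l : ℕ) :
    {x : Fin n → ℤ_[p] | (∀ i, (p : ℤ_[p]) ∣ x i - a i) ∧
      ‖eval x f‖ = (p : ℝ) ^ (-(k : ℤ)) ∧ ‖eval x g‖ = (p : ℝ) ^ (-(l : ℤ))} =
      levelSet p f g a k l \ (levelSet p f g a (k + 1) l ∪ levelSet p f g a k (l + 1)) := by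
  ext x
  simp only [levelSet, PadicInt.norm_eq_zpow_neg_iff, Set.mem_ofPred_eq, Set.mem_sdiff,
    Set.mem_union]
  tauto

theorem padicHaar_levelSet_sdiff_add (s t : ℕ) :
    padicHaar p n (levelSet p f g a s t \
        (levelSet p f g a (s + 1) t ∪ levelSet p f g a s (t + 1))) +
      padicHaar p n (levelSet p f g a (s + 1) t) + padicHaar p n (levelSet p f g a s (t + 1)) =
      padicHaar p n (levelSet p f g a s t) + padicHaar p n (levelSet p f g a (s + 1) (t + 1)) := by
  rw [← levelSet_succ_inter_levelSet_succ]
  exact measure_sdiff_union_add_add _ (levelSet_anti (by omega) le_rfl)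
    (levelSet_anti le_rfl (by omega)) (isClosed_levelSet _ _).measurableSet
    (isClosed_levelSet _ _).measurableSet

end LevelSet

section Step

variable {p : ℕ} [Fact p.Prime] {n : ℕ} {f g : MvPolynomial (Fin n) ℤ_[p]}
  {a v : Fin n → ℤ_[p]} {s t : ℕ}

theorem dvd_add_pow_mul_smul_sub {y : Fin n → ℤ_[p]} (hy : ∀ i, (p : ℤ_[p]) ∣ y i - a i)
    (hs : 1 ≤ s) (r : ℤ_[p]) (i : Fin n) :
    (p : ℤ_[p]) ∣ (y + ((p : ℤ_[p]) ^ s * r) • v) i - a i := by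
  have hps : (p : ℤ_[p]) ∣ (p : ℤ_[p]) ^ s := dvd_pow_self _ (by omega)
  convert dvd_add (hy i) ((hps.mul_right r).mul_right (v i)) using 1
  simp only [Pi.add_apply, Pi.smul_apply, smul_eq_mul]
  ring

theorem levelSet_eq_iUnion (hvf : (p : ℤ_[p]) ∣ ∑ j, v j * eval a (pderiv j f) - 1)
    (hvg : (p : ℤ_[p]) ∣ ∑ j, v j * eval a (pderiv j g)) (hs : 1 ≤ s) (ht : t ≤ s + 1) :
    levelSet p f g a s t =
      ⋃ j : ZMod p, (-((p : ℤ_[p]) ^ s * j.val) • v + ·) ⁻¹' levelSet p f g a (s + 1) t := by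
  replace hvg : (p : ℤ_[p]) ∣ ∑ j, v j * eval a (pderiv j g) - 0 := by rwa [sub_zero]
  ext x
  simp only [Set.mem_iUnion, Set.mem_preimage]
  constructor
  · rintro ⟨hx, ⟨u, hu⟩, hxg⟩
    refine ⟨PadicInt.toZMod u, ?_⟩
    set r : ℤ_[p] := -((PadicInt.toZMod u).val : ℤ_[p])
    have hxr : -((p : ℤ_[p]) ^ s * (PadicInt.toZMod u).val) • v + x
        = x + ((p : ℤ_[p]) ^ s * r) • v := by
      simp only [r]
      module
    rw [hxr]
    have hur : (p : ℤ_[p]) ^ (s + 1) ∣ (p : ℤ_[p]) ^ s * (u + r) := by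
      rw [pow_succ, ← sub_eq_add_neg]
      exact mul_dvd_mul_left _ (PadicInt.p_dvd_sub_natCast_val_toZMod u)
    refine ⟨dvd_add_pow_mul_smul_sub hx hs r, ?_, ?_⟩
    · convert dvd_add (pow_succ_dvd_eval_add_smul_sub hx hvf hs r) hur using 1
      rw [hu]
      ring
    · convert dvd_add ((pow_dvd_pow _ ht).trans (pow_succ_dvd_eval_add_smul_sub hx hvg hs r))
        hxg using 1
      ring
  · rintro ⟨j, hy, hyf, hyg⟩
    set y := -((p : ℤ_[p]) ^ s * j.val) • v + x
    have hxy : x = y + ((p : ℤ_[p]) ^ s * j.val) • v := by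
      simp only [y]
      module
    have hpow : (p : ℤ_[p]) ^ s ∣ (p : ℤ_[p]) ^ (s + 1) := pow_dvd_pow _ (by omega)
    rw [hxy]
    refine ⟨dvd_add_pow_mul_smul_sub hy hs _, ?_, ?_⟩
    · convert dvd_add (dvd_add (hpow.trans (pow_succ_dvd_eval_add_smul_sub hy hvf hs j.val))
        (hpow.trans hyf)) ((dvd_mul_right ((p : ℤ_[p]) ^ s) (j.val : ℤ_[p])).mul_right 1) using 1
      ring
    · convert dvd_add ((pow_dvd_pow _ ht).trans (pow_succ_dvd_eval_add_smul_sub hy hvg hs j.val))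
        hyg using 1
      ring

theorem pairwise_disjoint_preimage_add_levelSet
    (hvf : (p : ℤ_[p]) ∣ ∑ j, v j * eval a (pderiv j f) - 1) (hs : 1 ≤ s) :
    Pairwise (Function.onFun Disjoint fun j : ZMod p =>
      (-((p : ℤ_[p]) ^ s * j.val) • v + ·) ⁻¹' levelSet p f g a (s + 1) t) := by
  intro j j' hne
  rw [Function.onFun, Set.disjoint_left]
  rintro x ⟨hy, hyf, -⟩ ⟨-, hy'f, -⟩
  beta_reduce at hy hyf hy'f
  apply hne
  set y := -((p : ℤ_[p]) ^ s * j.val) • v + x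
  have hy' : -((p : ℤ_[p]) ^ s * j'.val) • v + x
      = y + ((p : ℤ_[p]) ^ s * (j.val - j'.val)) • v := by
    simp only [y]
    module
  have hdvd : (p : ℤ_[p]) ^ s * (p : ℤ_[p]) ∣ (p : ℤ_[p]) ^ s * (j.val - j'.val) := by
    rw [← pow_succ]
    rw [hy'] at hy'f
    convert dvd_sub (dvd_sub hy'f hyf)
      (pow_succ_dvd_eval_add_smul_sub hy hvf hs (j.val - j'.val : ℤ_[p])) using 1
    ring
  have hp : (p : ℤ_[p]) ^ s ≠ 0 :=
    pow_ne_zero _ (Nat.cast_ne_zero.mpr (Fact.out : p.Prime).ne_zero)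
  exact PadicInt.eq_of_p_dvd_natCast_val_sub ((mul_dvd_mul_iff_left hp).mp hdvd)

theorem padicHaar_levelSet_eq_mul (hvf : (p : ℤ_[p]) ∣ ∑ j, v j * eval a (pderiv j f) - 1)
    (hvg : (p : ℤ_[p]) ∣ ∑ j, v j * eval a (pderiv j g)) (hs : 1 ≤ s) (ht : t ≤ s + 1) :
    padicHaar p n (levelSet p f g a s t) = p * padicHaar p n (levelSet p f g a (s + 1) t) := by
  rw [levelSet_eq_iUnion hvf hvg hs ht, measure_iUnion_preimage_add _
    (isClosed_levelSet _ _).measurableSet _ (pairwise_disjoint_preimage_add_levelSet hvf hs),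
    ZMod.card]

end Step

section Measure

variable {p : ℕ} [Fact p.Prime] {n : ℕ} {f g : MvPolynomial (Fin n) ℤ_[p]}
  {a v w : Fin n → ℤ_[p]}

theorem pow_mul_padicHaar_levelSet (hfa : (p : ℤ_[p]) ∣ eval a f)
    (hga : (p : ℤ_[p]) ∣ eval a g) (hvf : (p : ℤ_[p]) ∣ ∑ j, v j * eval a (pderiv j f) - 1)
    (hvg : (p : ℤ_[p]) ∣ ∑ j, v j * eval a (pderiv j g))
    (hwf : (p : ℤ_[p]) ∣ ∑ j, w j * eval a (pderiv j f))
    (hwg : (p : ℤ_[p]) ∣ ∑ j, w j * eval a (pderiv j g) - 1) (s t : ℕ) :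
    (p : ℝ≥0∞) ^ (n + s + t) * padicHaar p n (levelSet p f g a (s + 1) (t + 1)) = 1 := by
  induction h : s + t generalizing s t with
  | zero =>
    obtain ⟨rfl, rfl⟩ : s = 0 ∧ t = 0 := by omega
    rw [levelSet_one_one hfa hga]
    exact pow_mul_padicHaar_coset p n a
  | succ N ih =>
    rcases le_total t s with hts | hst
    · obtain ⟨s, rfl⟩ : ∃ s', s = s' + 1 := ⟨s - 1, by omega⟩
      rw [← ih s t (by omega),
        padicHaar_levelSet_eq_mul (s := s + 1) hvf hvg (by omega) (by omega)]
      ring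
    · obtain ⟨t, rfl⟩ : ∃ t', t = t' + 1 := ⟨t - 1, by omega⟩
      rw [← ih s t (by omega), ← levelSet_comm (s + 1) (t + 1 + 1),
        ← levelSet_comm (s + 1) (t + 1),
        padicHaar_levelSet_eq_mul (s := t + 1) hwg hwf (by omega) (by omega)]
      ring

theorem padicHaar_levelSet (hfa : (p : ℤ_[p]) ∣ eval a f)
    (hga : (p : ℤ_[p]) ∣ eval a g) (hvf : (p : ℤ_[p]) ∣ ∑ j, v j * eval a (pderiv j f) - 1)
    (hvg : (p : ℤ_[p]) ∣ ∑ j, v j * eval a (pderiv j g))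
    (hwf : (p : ℤ_[p]) ∣ ∑ j, w j * eval a (pderiv j f))
    (hwg : (p : ℤ_[p]) ∣ ∑ j, w j * eval a (pderiv j g) - 1) (s t : ℕ) :
    padicHaar p n (levelSet p f g a (s + 1) (t + 1)) = (p : ℝ≥0∞) ^ (-((n + s + t : ℕ) : ℤ)) := by
  have h := pow_mul_padicHaar_levelSet hfa hga hvf hvg hwf hwg s t
  rw [mul_comm] at h
  rw [ENNReal.eq_inv_of_mul_eq_one_left h, ENNReal.zpow_neg, zpow_natCast]

end Measure

theorem exists_dvd_sum_mul_eval_pderiv_sub {p : ℕ} [Fact p.Prime] {σ : Type*} [Fintype σ]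
    {r : ℕ} (F : Fin r → MvPolynomial σ ℤ_[p]) (a : σ → ℤ_[p])
    (hrank : (Matrix.of fun i j => PadicInt.toZMod (eval a (pderiv j (F i)))).rank = r)
    (τ : Fin r → ℤ_[p]) :
    ∃ v : σ → ℤ_[p], ∀ i, (p : ℤ_[p]) ∣ ∑ j, v j * eval a (pderiv j (F i)) - τ i := by
  obtain ⟨u, hu⟩ := Matrix.exists_mulVec_eq_of_rank_eq _ (hrank.trans (Fintype.card_fin r).symm)
    (fun i => PadicInt.toZMod (τ i))
  refine ⟨fun j => (u j).val, fun i => ?_⟩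
  rw [PadicInt.p_dvd_iff_toZMod_eq_zero, map_sub, map_sum, ← congrFun hu i, sub_eq_zero]
  simp [Matrix.mulVec, dotProduct, mul_comm]

theorem measure_ord_eq_general (p : ℕ) [Fact p.Prime] (n : ℕ)
    (f g : MvPolynomial (Fin n) ℤ_[p]) (a : Fin n → ℤ_[p])
    (hfa : (p : ℤ_[p]) ∣ eval a f) (hga : (p : ℤ_[p]) ∣ eval a g)
    (hrank : Matrix.rank (Matrix.of fun (i : Fin 2) (j : Fin n) =>
      PadicInt.toZMod (eval a (pderiv j (![f, g] i)))) = 2)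
    (k l : ℕ) (hk : 1 ≤ k) (hl : 1 ≤ l) :
    padicHaar p n {x : Fin n → ℤ_[p] | (∀ i, (p : ℤ_[p]) ∣ (x i - a i)) ∧
        ‖eval x f‖ = (p : ℝ) ^ (-(k : ℤ)) ∧ ‖eval x g‖ = (p : ℝ) ^ (-(l : ℤ))}
      = (p : ENNReal) ^ (-(n : ℤ) - (k : ℤ) - (l : ℤ)) * ((p : ENNReal) - 1) ^ 2 := by
  obtain ⟨v, hv⟩ := exists_dvd_sum_mul_eval_pderiv_sub ![f, g] a hrank ![1, 0]
  obtain ⟨w, hw⟩ := exists_dvd_sum_mul_eval_pderiv_sub ![f, g] a hrank ![0, 1]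
  have hA := padicHaar_levelSet hfa hga (by simpa using hv 0) (by simpa using hv 1)
    (by simpa using hw 0) (by simpa using hw 1)
  obtain ⟨k, rfl⟩ := Nat.exists_eq_add_of_le' hk
  obtain ⟨l, rfl⟩ := Nat.exists_eq_add_of_le' hl
  have key := padicHaar_levelSet_sdiff_add (p := p) (f := f) (g := g) (a := a) (k + 1) (l + 1)
  rw [hA, hA, hA, hA] at key
  rw [setOf_norm_eq_eq_levelSet_sdiff]
  refine ENNReal.eq_zpow_mul_sub_one_sq (Fact.out : p.Prime).ne_zero ?_
  convert key using 4 <;> omega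

theorem measure_ord_eq (p : ℕ) [Fact p.Prime] (n : ℕ) (hn : 2 ≤ n)
    (f g : MvPolynomial (Fin n) ℤ_[p]) (a : Fin n → ℤ_[p])
    (hfa : (p : ℤ_[p]) ∣ eval a f) (hga : (p : ℤ_[p]) ∣ eval a g)
    (hrank : Matrix.rank (Matrix.of fun (i : Fin 2) (j : Fin n) =>
      PadicInt.toZMod (eval a (pderiv j (![f, g] i)))) = 2)
    (k l : ℕ) (hk : 1 ≤ k) (hl : 1 ≤ l) :
    padicHaar p n {x : Fin n → ℤ_[p] | (∀ i, (p : ℤ_[p]) ∣ (x i - a i)) ∧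
        ‖eval x f‖ = (p : ℝ) ^ (-(k : ℤ)) ∧ ‖eval x g‖ = (p : ℝ) ^ (-(l : ℤ))}
      = (p : ENNReal) ^ (-(n : ℤ) - (k : ℤ) - (l : ℤ)) * ((p : ENNReal) - 1) ^ 2 :=
  measure_ord_eq_general p n f g a hfa hga hrank k l hk hl
end

section
/- (Hensel's lemma in several variables.) Let p be a prime and let f = (f_1,…,f_n) be an n-tuple of polynomials f_i ∈ ℤ_p[x_1,…,x_n]. Let J(f,x) denote the Jacobian determinant det(∂f_i/∂x_j(x)). Let k be a positive integer and a = (a_1,…,a_n) ∈ ℤ_p^n such that f_i(a) ≡ 0 mod p^k for all i, and suppose J(f,a) ≢ 0 mod p. Then there exists a unique a' ∈ ℤ_p^n such that f_i(a') = 0 for all i and a'_i ≡ a_i mod p^k for all i. -/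
open MvPolynomial

/-- If `c` divides each `h j`, then `c` divides `g(x+h) - g(x)`. -/
lemma hensel_aux_eval_sub_dvd {R : Type*} [CommRing R] {n : ℕ} (g : MvPolynomial (Fin n) R)
    (x h : Fin n → R) (c : R) (hc : ∀ j, c ∣ h j) :
    c ∣ eval (fun j => x j + h j) g - eval x g := by
  induction g using MvPolynomial.induction_on with
  | C r => simp
  | add q r hq hr =>
    simpa only [map_add, add_sub_add_comm] using dvd_add hq hr
  | mul_X q i hq =>
    have key : eval (fun j => x j + h j) (q * X i) - eval x (q * X i)
        = (eval (fun j => x j + h j) q - eval x q) * x i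
          + eval (fun j => x j + h j) q * h i := by
      simp only [eval_mul, eval_X]; ring
    rw [key]
    exact dvd_add (hq.mul_right _) ((hc i).mul_left _)

/-- First-order Taylor expansion: the remainder is divisible by `c ^ 2`. -/
lemma hensel_aux_taylor_sq_dvd {R : Type*} [CommRing R] {n : ℕ} (g : MvPolynomial (Fin n) R)
    (x h : Fin n → R) (c : R) (hc : ∀ j, c ∣ h j) :
    c ^ 2 ∣ eval (fun j => x j + h j) g - eval x g
      - ∑ j, eval x (pderiv j g) * h j := by
  induction g using MvPolynomial.induction_on with
  | C r => simp
  | add q r hq hr =>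
    convert dvd_add hq hr using 1
    simp only [map_add]
    have hterm : ∀ j : Fin n, (eval x (pderiv j q) + eval x (pderiv j r)) * h j
        = eval x (pderiv j q) * h j + eval x (pderiv j r) * h j :=
      fun j => add_mul _ _ _
    rw [Finset.sum_congr rfl fun j _ => hterm j, Finset.sum_add_distrib]
    ring
  | mul_X q i hq =>
    have hsum : ∀ j : Fin n, eval x (pderiv j (q * X i)) * h j
        = eval x (pderiv j q) * h j * x i
          + (if j = i then eval x q * h j else 0) := by
      intro j
      rw [pderiv_mul, pderiv_X]
      by_cases hji : j = i
      · subst hji; simp [Pi.single_eq_same]; ring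
      · simp [Pi.single_eq_of_ne hji, hji]; ring
    have hsum2 : (∑ j, eval x (pderiv j (q * X i)) * h j)
        = (∑ j, eval x (pderiv j q) * h j) * x i + eval x q * h i := by
      rw [Finset.sum_congr rfl fun j _ => hsum j, Finset.sum_add_distrib,
        Finset.sum_ite_eq' Finset.univ i fun j => eval x q * h j, Finset.sum_mul]
      simp
    have key : eval (fun j => x j + h j) (q * X i) - eval x (q * X i)
        - ∑ j, eval x (pderiv j (q * X i)) * h j
        = x i * (eval (fun j => x j + h j) q - eval x q
            - ∑ j, eval x (pderiv j q) * h j)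
          + h i * (eval (fun j => x j + h j) q - eval x q) := by
      rw [hsum2]; simp only [eval_mul, eval_X]; ring
    rw [key]
    refine dvd_add (hq.mul_left _) ?_
    rw [pow_two]
    exact mul_dvd_mul (hc i) (hensel_aux_eval_sub_dvd q x h c hc)

lemma hensel_aux_dvd_iff_norm {p : ℕ} [Fact p.Prime] (m : ℕ) (z : ℤ_[p]) :
    (p : ℤ_[p]) ^ m ∣ z ↔ ‖z‖ ≤ (p : ℝ) ^ (-m : ℤ) := by
  rw [PadicInt.norm_le_pow_iff_mem_span_pow, Ideal.mem_span_singleton]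

lemma hensel_aux_eq_zero_of_all_dvd {p : ℕ} [Fact p.Prime] (z : ℤ_[p])
    (hz : ∀ m : ℕ, (p : ℤ_[p]) ^ m ∣ z) : z = 0 := by
  by_contra h0
  have hz0 : 0 < ‖z‖ := norm_pos_iff.mpr h0
  have hp1 : (1 : ℝ) < (p : ℝ) := by exact_mod_cast (Fact.out : p.Prime).one_lt
  obtain ⟨m, hm⟩ := exists_pow_lt_of_lt_one hz0 (inv_lt_one_of_one_lt₀ hp1)
  have hle := (hensel_aux_dvd_iff_norm m z).mp (hz m)
  rw [zpow_neg, zpow_natCast, ← inv_pow] at hle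
  linarith

lemma hensel_aux_det_unit {p : ℕ} [Fact p.Prime] {n : ℕ} (M N : Matrix (Fin n) (Fin n) ℤ_[p])
    (hcong : ∀ i j, (p : ℤ_[p]) ∣ M i j - N i j) (hN : ¬ (p : ℤ_[p]) ∣ N.det) :
    IsUnit M.det := by
  have hdet : (p : ℤ_[p]) ∣ M.det - N.det := by
    let I : Ideal ℤ_[p] := Ideal.span {(p : ℤ_[p])}
    have : Ideal.Quotient.mk I M.det = Ideal.Quotient.mk I N.det := by
      rw [RingHom.map_det, RingHom.map_det]
      congr 1
      ext i j
      rw [RingHom.mapMatrix_apply, RingHom.mapMatrix_apply, Matrix.map_apply, Matrix.map_apply]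
      rw [Ideal.Quotient.eq, Ideal.mem_span_singleton]
      exact hcong i j
    rwa [Ideal.Quotient.eq, Ideal.mem_span_singleton] at this
  have hM : ¬ (p : ℤ_[p]) ∣ M.det := fun h => hN (by
    have := dvd_sub h hdet
    simpa using this)
  rw [PadicInt.isUnit_iff]
  refine le_antisymm (PadicInt.norm_le_one _) ?_
  by_contra hlt
  push_neg at hlt
  exact hM ((PadicInt.norm_lt_one_iff_dvd _).mp hlt)

/-- Jacobian at any point congruent to `a` mod `p` is invertible. -/
lemma hensel_aux_jac_unit {p : ℕ} [Fact p.Prime] {n : ℕ}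
    (f : Fin n → MvPolynomial (Fin n) ℤ_[p]) (a : Fin n → ℤ_[p])
    (hJ : ¬ (p : ℤ_[p]) ∣
      Matrix.det (Matrix.of fun (i : Fin n) (j : Fin n) => eval a (pderiv j (f i))))
    (x : Fin n → ℤ_[p]) (hx : ∀ j, (p : ℤ_[p]) ∣ x j - a j) :
    IsUnit (Matrix.of fun (i : Fin n) (j : Fin n) => eval x (pderiv j (f i))).det := by
  refine hensel_aux_det_unit _ _ (fun i j => ?_) hJ
  have hfun : (fun j => a j + (x j - a j)) = x := funext fun j => by ring
  have := hensel_aux_eval_sub_dvd (pderiv j (f i)) a (fun j => x j - a j) (p : ℤ_[p]) hx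
  rw [hfun] at this
  simpa using this

/-- One Newton iteration step. -/
lemma hensel_aux_newton_step {p : ℕ} [Fact p.Prime] {n : ℕ}
    (f : Fin n → MvPolynomial (Fin n) ℤ_[p]) (a : Fin n → ℤ_[p])
    (hJ : ¬ (p : ℤ_[p]) ∣
      Matrix.det (Matrix.of fun (i : Fin n) (j : Fin n) => eval a (pderiv j (f i))))
    (k : ℕ) (hk : 1 ≤ k) (m : ℕ) (hm : k ≤ m) (x : Fin n → ℤ_[p])
    (hxa : ∀ i, (p : ℤ_[p]) ^ k ∣ x i - a i) (hfx : ∀ i, (p : ℤ_[p]) ^ m ∣ eval x (f i)) :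
    ∃ x', (∀ i, (p : ℤ_[p]) ^ m ∣ x' i - x i) ∧
      ∀ i, (p : ℤ_[p]) ^ (m + 1) ∣ eval x' (f i) := by
  set M : Matrix (Fin n) (Fin n) ℤ_[p] :=
    Matrix.of fun i j => eval x (pderiv j (f i)) with hM
  have hpx : ∀ j, (p : ℤ_[p]) ∣ x j - a j := fun j =>
    (dvd_pow_self (p : ℤ_[p]) (by omega : k ≠ 0)).trans (hxa j)
  have hu : IsUnit M.det := hensel_aux_jac_unit f a hJ x hpx
  set w : Fin n → ℤ_[p] := fun i => eval x (f i) with hw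
  set h : Fin n → ℤ_[p] := fun j => -(M⁻¹.mulVec w j) with hh
  have hhd : ∀ j, (p : ℤ_[p]) ^ m ∣ h j := by
    intro j
    rw [hh]
    refine dvd_neg.mpr ?_
    have hrfl : M⁻¹.mulVec w j = ∑ i, M⁻¹ j i * w i := rfl
    rw [hrfl]
    exact Finset.dvd_sum fun i _ => (hfx i).mul_left _
  have hMh : M.mulVec h = fun i => -w i := by
    have : M.mulVec (M⁻¹.mulVec w) = w := by
      rw [Matrix.mulVec_mulVec, Matrix.mul_nonsing_inv _ hu, Matrix.one_mulVec]
    funext i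
    have hneg : h = -(M⁻¹.mulVec w) := funext fun j => rfl
    rw [hneg, Matrix.mulVec_neg, this]
    rfl
  refine ⟨fun j => x j + h j, fun i => by simpa using hhd i, fun i => ?_⟩
  have htay := hensel_aux_taylor_sq_dvd (f i) x h ((p : ℤ_[p]) ^ m) hhd
  have hsum : (∑ j, eval x (pderiv j (f i)) * h j) = (M.mulVec h) i := by
    rw [Matrix.mulVec, dotProduct]
    rfl
  rw [hsum, hMh] at htay
  have hzero : eval x (f i) + -w i = 0 := by rw [hw]; ring
  have hfin : ((p : ℤ_[p]) ^ m) ^ 2 ∣ eval (fun j => x j + h j) (f i) := by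
    have heq : eval (fun j => x j + h j) (f i) - eval x (f i) - (-w i)
        = eval (fun j => x j + h j) (f i) := by rw [hw]; ring
    rwa [heq] at htay
  refine dvd_trans ?_ hfin
  rw [← pow_mul]
  exact pow_dvd_pow _ (by omega)

theorem hensel_several_variables (p : ℕ) [Fact p.Prime] (n : ℕ)
    (f : Fin n → MvPolynomial (Fin n) ℤ_[p]) (k : ℕ) (hk : 1 ≤ k)
    (a : Fin n → ℤ_[p]) (ha : ∀ i, (p : ℤ_[p]) ^ k ∣ eval a (f i))
    (hJ : ¬ (p : ℤ_[p]) ∣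
      Matrix.det (Matrix.of fun (i : Fin n) (j : Fin n) => eval a (pderiv j (f i)))) :
    ∃! a' : Fin n → ℤ_[p],
      (∀ i, eval a' (f i) = 0) ∧ ∀ i, (p : ℤ_[p]) ^ k ∣ (a' i - a i) := by
  classical
  -- uniqueness part, proved first as a general claim
  have huniq : ∀ y z : Fin n → ℤ_[p],
      (∀ i, eval y (f i) = 0) → (∀ i, (p : ℤ_[p]) ^ k ∣ y i - a i) →
      (∀ i, eval z (f i) = 0) → (∀ i, (p : ℤ_[p]) ^ k ∣ z i - a i) → y = z := by
    intro y z hy1 hy2 hz1 hz2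
    have hall : ∀ m : ℕ, ∀ i, (p : ℤ_[p]) ^ (k + m) ∣ y i - z i := by
      intro m
      induction m with
      | zero =>
        intro i
        have : y i - z i = (y i - a i) - (z i - a i) := by ring
        rw [this]
        simpa using dvd_sub (hy2 i) (hz2 i)
      | succ m ih =>
        set M : Matrix (Fin n) (Fin n) ℤ_[p] :=
          Matrix.of fun i j => eval z (pderiv j (f i)) with hM
        have hpz : ∀ j, (p : ℤ_[p]) ∣ z j - a j := fun j =>
          (dvd_pow_self (p : ℤ_[p]) (by omega : k ≠ 0)).trans (hz2 j)
        have hu : IsUnit M.det := hensel_aux_jac_unit f a hJ z hpz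
        set h : Fin n → ℤ_[p] := fun j => y j - z j with hh
        have hMh : ∀ i, ((p : ℤ_[p]) ^ (k + m)) ^ 2 ∣ (M.mulVec h) i := by
          intro i
          have htay := hensel_aux_taylor_sq_dvd (f i) z h ((p : ℤ_[p]) ^ (k + m)) ih
          have hfun : (fun j => z j + h j) = y := funext fun j => by rw [hh]; ring
          rw [hfun, hy1 i, hz1 i] at htay
          have hsum : (∑ j, eval z (pderiv j (f i)) * h j) = (M.mulVec h) i := by
            rw [Matrix.mulVec, dotProduct]
            rfl
          rw [hsum] at htay
          simpa using htay
        have hinv : M⁻¹.mulVec (M.mulVec h) = h := by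
          rw [Matrix.mulVec_mulVec, Matrix.nonsing_inv_mul _ hu, Matrix.one_mulVec]
        intro i
        have : ((p : ℤ_[p]) ^ (k + m)) ^ 2 ∣ h i := by
          rw [← hinv]
          rw [Matrix.mulVec, dotProduct]
          exact Finset.dvd_sum fun j _ => (hMh j).mul_left _
        refine dvd_trans ?_ this
        rw [← pow_mul]
        exact pow_dvd_pow _ (by omega)
    funext i
    have : y i - z i = 0 := by
      refine hensel_aux_eq_zero_of_all_dvd _ fun m => ?_
      exact (pow_dvd_pow _ (Nat.le_add_left m k)).trans (hall m i)
    exact sub_eq_zero.mp this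
  -- existence: Newton sequence
  have hstep : ∀ (m : ℕ) (x : Fin n → ℤ_[p]), ∃ x' : Fin n → ℤ_[p],
      ((∀ i, (p : ℤ_[p]) ^ k ∣ x i - a i) → (∀ i, (p : ℤ_[p]) ^ (k + m) ∣ eval x (f i)) →
        (∀ i, (p : ℤ_[p]) ^ (k + m) ∣ x' i - x i) ∧
          ∀ i, (p : ℤ_[p]) ^ (k + m + 1) ∣ eval x' (f i)) := by
    intro m x
    by_cases hx : (∀ i, (p : ℤ_[p]) ^ k ∣ x i - a i) ∧
        (∀ i, (p : ℤ_[p]) ^ (k + m) ∣ eval x (f i))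
    · obtain ⟨x', h1, h2⟩ := hensel_aux_newton_step f a hJ k hk (k + m)
        (Nat.le_add_right k m) x hx.1 hx.2
      exact ⟨x', fun _ _ => ⟨h1, h2⟩⟩
    · exact ⟨x, fun h1 h2 => absurd ⟨h1, h2⟩ hx⟩
  choose F hF using hstep
  set u : ℕ → Fin n → ℤ_[p] := fun m => Nat.rec a (fun m xm => F m xm) m with hu
  have hu0 : u 0 = a := rfl
  have husucc : ∀ m, u (m + 1) = F m (u m) := fun m => rfl
  have hinv : ∀ m, (∀ i, (p : ℤ_[p]) ^ k ∣ u m i - a i) ∧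
      (∀ i, (p : ℤ_[p]) ^ (k + m) ∣ eval (u m) (f i)) := by
    intro m
    induction m with
    | zero => exact ⟨fun i => by simp [hu0], by simpa [hu0] using ha⟩
    | succ m ih =>
      have hs := hF m (u m) ih.1 ih.2
      rw [← husucc m] at hs
      refine ⟨fun i => ?_, hs.2⟩
      have : u (m + 1) i - a i = (u (m + 1) i - u m i) + (u m i - a i) := by ring
      rw [this]
      exact dvd_add ((pow_dvd_pow _ (Nat.le_add_right k m)).trans (hs.1 i)) (ih.1 i)
  have hdiff : ∀ m i, (p : ℤ_[p]) ^ (k + m) ∣ u (m + 1) i - u m i := by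
    intro m i
    have hs := hF m (u m) (hinv m).1 (hinv m).2
    rw [← husucc m] at hs
    exact hs.1 i
  have htel : ∀ m l, m ≤ l → ∀ i, (p : ℤ_[p]) ^ (k + m) ∣ u l i - u m i := by
    intro m l hml
    induction l, hml using Nat.le_induction with
    | base => intro i; simp
    | succ l hml ih =>
      intro i
      have : u (l + 1) i - u m i = (u (l + 1) i - u l i) + (u l i - u m i) := by ring
      rw [this]
      exact dvd_add ((pow_dvd_pow _ (by omega)).trans (hdiff l i)) (ih i)
  -- Cauchy and limit
  have hp1 : (1 : ℝ) < (p : ℝ) := by exact_mod_cast (Fact.out : p.Prime).one_lt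
  have hcau : ∀ i, CauchySeq (fun m => u m i) := by
    intro i
    refine cauchySeq_of_le_geometric (r := (p : ℝ)⁻¹) 1 (inv_lt_one_of_one_lt₀ hp1) fun m => ?_
    rw [dist_eq_norm, ← norm_neg]
    have hdvd : (p : ℤ_[p]) ^ m ∣ u (m + 1) i - u m i :=
      (pow_dvd_pow _ (Nat.le_add_left m k)).trans (hdiff m i)
    have := (hensel_aux_dvd_iff_norm m _).mp hdvd
    rw [zpow_neg, zpow_natCast, ← inv_pow] at this
    calc ‖-(u m i - u (m + 1) i)‖ = ‖u (m + 1) i - u m i‖ := by rw [neg_sub]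
    _ ≤ ((p : ℝ)⁻¹) ^ m := this
    _ = 1 * ((p : ℝ)⁻¹) ^ m := by ring
  have hlim : ∀ i, ∃ b : ℤ_[p], Filter.Tendsto (fun m => u m i) Filter.atTop (nhds b) :=
    fun i => cauchySeq_tendsto_of_complete (hcau i)
  choose b hb using hlim
  have hbu : ∀ m i, (p : ℤ_[p]) ^ (k + m) ∣ b i - u m i := by
    intro m i
    rw [hensel_aux_dvd_iff_norm]
    have htend : Filter.Tendsto (fun l => ‖u l i - u m i‖) Filter.atTop
        (nhds ‖b i - u m i‖) := ((hb i).sub tendsto_const_nhds).norm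
    refine le_of_tendsto htend (Filter.eventually_atTop.mpr ⟨m, fun l hl => ?_⟩)
    exact (hensel_aux_dvd_iff_norm _ _).mp (htel m l hl i)
  have hfb : ∀ i, eval b (f i) = 0 := by
    intro i
    refine hensel_aux_eq_zero_of_all_dvd _ fun m => ?_
    have h1 : (p : ℤ_[p]) ^ (k + m) ∣ eval b (f i) - eval (u m) (f i) := by
      have := hensel_aux_eval_sub_dvd (f i) (u m) (fun j => b j - u m j)
        ((p : ℤ_[p]) ^ (k + m)) (fun j => hbu m j)
      have hfun : (fun j => u m j + (b j - u m j)) = b := funext fun j => by ring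
      rwa [hfun] at this
    have h2 := (hinv m).2 i
    have h3 : (p : ℤ_[p]) ^ (k + m) ∣ eval b (f i) := by
      have := dvd_add h1 h2
      simpa using this
    exact (pow_dvd_pow _ (Nat.le_add_left m k)).trans h3
  have hba : ∀ i, (p : ℤ_[p]) ^ k ∣ b i - a i := by
    intro i
    have := hbu 0 i
    rw [hu0] at this
    simpa using this
  exact ⟨b, ⟨hfb, hba⟩, fun y hy => huniq y b hy.1 hy.2 hfb hba⟩
end

section
/- Let p be a prime, n ≥ 1, and let k_1,…,k_r ∈ ℕ^n∖{0} be ℝ-linearly independent vectors. Let δ = {λ_1 k_1 + ⋯ + λ_r k_r : λ_j ∈ ℝ, λ_j > 0 for all j}, and let M : ℝ^n → ℝ be a linear form with M(k_j) > 0 for j = 1,…,r. Then the series Σ_{k ∈ ℕ^n ∩ δ} p^{−M(k)} converges and equals (Σ_h p^{M(h)}) / Π_{j=1}^{r} (p^{M(k_j)} − 1), where h runs through the finite set ℤ^n ∩ {λ_1 k_1 + ⋯ + λ_r k_r : 0 ≤ λ_j < 1 for j = 1,…,r}. -/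
/-!
Every lattice point `g` of the open cone is uniquely `∑ⱼ (mⱼ + 1) kⱼ - h` with `m ∈ ℕ^r` and `h` a
lattice point of the half-open parallelepiped: writing `g = ∑ⱼ λⱼ kⱼ`, take `mⱼ + 1 = ⌈λⱼ⌉`. Since
`M` is linear, `p^{-M(g)} = p^{M(h)} ∏ⱼ p^{-(mⱼ+1) M(kⱼ)}`, so the series is the finite sum over `h`
times a product of `r` geometric series `∑ₘ p^{-(m+1) M(kⱼ)} = 1 / (p^{M(kⱼ)} - 1)`. The parallelepiped
is bounded, hence contains only finitely many lattice points.
-/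

/-- Embedding of `ℕ^n` into `ℝ^n`. -/
def toRn {n : ℕ} (k : Fin n → ℕ) : Fin n → ℝ := fun i => (k i : ℝ)

theorem HasSum.mul_real {ι κ : Type*} {f : ι → ℝ} {g : κ → ℝ} {s t : ℝ}
    (hf : HasSum f s) (hg : HasSum g t) :
    HasSum (fun x : ι × κ => f x.1 * g x.2) (s * t) :=
  hf.mul hg (summable_mul_of_summable_norm hf.summable.norm hg.summable.norm)

theorem hasSum_fin_pi_prod {κ : Type*} {r : ℕ} (f : Fin r → κ → ℝ) (S : Fin r → ℝ)
    (hf : ∀ j, HasSum (f j) (S j)) :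
    HasSum (fun m : Fin r → κ => ∏ j, f j (m j)) (∏ j, S j) := by
  induction r with
  | zero => simp
  | succ r ih =>
    have h := (hf 0).mul_real (ih (fun j => f j.succ) (fun j => S j.succ) fun j => hf j.succ)
    rw [← (Fin.consEquiv fun _ => κ).symm.hasSum_iff] at h
    simpa [Function.comp_def, Fin.prod_univ_succ, Fin.consEquiv, Fin.tail] using h

theorem hasSum_pi_prod {ι κ : Type*} [Fintype ι] (f : ι → κ → ℝ) (S : ι → ℝ)
    (hf : ∀ j, HasSum (f j) (S j)) :
    HasSum (fun m : ι → κ => ∏ j, f j (m j)) (∏ j, S j) := by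
  let e := Fintype.equivFin ι
  have h := hasSum_fin_pi_prod (fun j => f (e.symm j)) (fun j => S (e.symm j))
    fun j => hf (e.symm j)
  rw [← (e.arrowCongr (Equiv.refl κ)).hasSum_iff] at h
  simpa [Function.comp_def, Equiv.arrowCongr, e.symm.prod_comp (fun j => S j),
    e.symm.prod_comp (fun j => f j _)] using h

theorem hasSum_rpow_neg_succ_mul {p a : ℝ} (hp : 1 < p) (ha : 0 < a) :
    HasSum (fun m : ℕ => p ^ (-(((m : ℝ) + 1) * a))) (p ^ a - 1)⁻¹ := by
  have hp0 : 0 < p := by linarith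
  have hpa : 1 < p ^ a := Real.one_lt_rpow hp ha
  have hpow : ∀ m : ℕ, p ^ (-(((m : ℝ) + 1) * a)) = p ^ (-a) * (p ^ (-a)) ^ m := by
    intro m
    rw [← Real.rpow_natCast, ← Real.rpow_mul hp0.le, ← Real.rpow_add hp0]
    ring_nf
  have hsum : p ^ (-a) * (1 - p ^ (-a))⁻¹ = (p ^ a - 1)⁻¹ := by
    rw [Real.rpow_neg hp0.le]
    field_simp
  simpa only [hpow, hsum] using (hasSum_geometric_of_lt_one (Real.rpow_nonneg hp0.le _)
    (Real.rpow_lt_one_of_one_lt_of_neg hp (neg_neg_of_pos ha))).mul_left (p ^ (-a))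

theorem Nat.ceil_add_one_sub {μ : ℝ} (m : ℕ) (h0 : 0 ≤ μ) (h1 : μ < 1) :
    ⌈(m : ℝ) + 1 - μ⌉₊ = m + 1 := by
  rw [Nat.ceil_eq_iff (Nat.succ_ne_zero m)]
  push_cast
  constructor <;> linarith

section Cone

variable {ι E : Type*} [Fintype ι] [AddCommGroup E] [Module ℝ E]

def openCone (v : ι → E) : Set E :=
  {x | ∃ lam : ι → ℝ, (∀ j, 0 < lam j) ∧ x = ∑ j, lam j • v j}

def halfOpenParallelepiped (v : ι → E) : Set E :=
  {x | ∃ lam : ι → ℝ, (∀ j, 0 ≤ lam j ∧ lam j < 1) ∧ x = ∑ j, lam j • v j}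

theorem halfOpenParallelepiped_subset_parallelepiped (v : ι → E) :
    halfOpenParallelepiped v ⊆ parallelepiped v := by
  rintro x ⟨lam, hlam, rfl⟩
  exact (mem_parallelepiped_iff v _).mpr
    ⟨lam, ⟨fun j => (hlam j).1, fun j => (hlam j).2.le⟩, rfl⟩

theorem isCompact_parallelepiped [TopologicalSpace E] [IsTopologicalAddGroup E]
    [ContinuousSMul ℝ E] (v : ι → E) : IsCompact (parallelepiped v) :=
  isCompact_Icc.image (by fun_prop)

theorem openCone_nonneg [PartialOrder E] [IsOrderedAddMonoid E] [PosSMulMono ℝ E] {v : ι → E}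
    (hv : ∀ j, 0 ≤ v j) {x : E} (hx : x ∈ openCone v) : 0 ≤ x := by
  obtain ⟨lam, hlam, rfl⟩ := hx
  exact Finset.sum_nonneg fun j _ => smul_nonneg (hlam j).le (hv j)

variable {G : Type*} [AddCommGroup G] (φ : G →+ E) {w : ι → G} {v : ι → E}

theorem map_sum_succ_smul_sub (hw : ∀ j, φ (w j) = v j) (m : ι → ℕ) {h : G} {μ : ι → ℝ}
    (hh : φ h = ∑ j, μ j • v j) :
    φ (∑ j, (m j + 1) • w j - h) = ∑ j, ((m j : ℝ) + 1 - μ j) • v j := by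
  simp only [map_sub, map_sum, map_nsmul, hw, hh, sub_smul, Finset.sum_sub_distrib,
    ← Nat.cast_smul_eq_nsmul ℝ]
  push_cast
  rfl

theorem map_sum_succ_smul_sub_mem_openCone (hw : ∀ j, φ (w j) = v j) (m : ι → ℕ) {h : G}
    (hh : φ h ∈ halfOpenParallelepiped v) : φ (∑ j, (m j + 1) • w j - h) ∈ openCone v := by
  obtain ⟨μ, hμ, hμh⟩ := hh
  refine ⟨fun j => (m j : ℝ) + 1 - μ j, fun j => ?_, map_sum_succ_smul_sub φ hw m hμh⟩
  linarith [(hμ j).2, (m j).cast_nonneg (α := ℝ)]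

def toOpenCone (hw : ∀ j, φ (w j) = v j) (x : (φ ⁻¹' halfOpenParallelepiped v) × (ι → ℕ)) :
    {g : G // φ g ∈ openCone v} :=
  ⟨∑ j, (x.2 j + 1) • w j - x.1, map_sum_succ_smul_sub_mem_openCone φ hw x.2 x.1.2⟩

theorem toOpenCone_injective (hw : ∀ j, φ (w j) = v j) (hv : LinearIndependent ℝ v) :
    Function.Injective (toOpenCone φ hw) := by
  rintro ⟨⟨h, μ, hμ, hμh⟩, m⟩ ⟨⟨h', μ', hμ', hμh'⟩, m'⟩ he
  have hcoef := hv.eq_coords_of_eq <| (map_sum_succ_smul_sub φ hw m hμh).symm.trans <|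
    (congrArg (φ ·.1) he).trans (map_sum_succ_smul_sub φ hw m' hμh')
  have hm : m = m' := funext fun j => by
    simpa [Nat.ceil_add_one_sub _ (hμ j).1 (hμ j).2, Nat.ceil_add_one_sub _ (hμ' j).1 (hμ' j).2]
      using congrArg Nat.ceil (hcoef j)
  subst hm
  have hh : h = h' := by simpa [toOpenCone] using congrArg Subtype.val he
  subst hh
  rfl

theorem toOpenCone_surjective (hw : ∀ j, φ (w j) = v j) :
    Function.Surjective (toOpenCone φ hw) := by
  rintro ⟨g, lam, hlam, hg⟩
  set m : ι → ℕ := fun j => ⌈lam j⌉₊ - 1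
  have hm : ∀ j, (m j : ℝ) + 1 = ⌈lam j⌉₊ := fun j => by
    have := Nat.ceil_pos.mpr (hlam j)
    simp only [m]
    push_cast [Nat.one_le_iff_ne_zero.mpr this.ne']
    ring
  have hh : φ (∑ j, (m j + 1) • w j - g) ∈ halfOpenParallelepiped v := by
    refine ⟨fun j => ⌈lam j⌉₊ - lam j, fun j => ⟨?_, ?_⟩, ?_⟩
    · linarith [Nat.le_ceil (lam j)]
    · linarith [Nat.ceil_lt_add_one (hlam j).le]
    · rw [map_sum_succ_smul_sub φ hw m hg]
      simp only [hm]
  exact ⟨⟨⟨_, hh⟩, m⟩, Subtype.ext (sub_sub_cancel _ _)⟩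

theorem rpow_neg_toOpenCone (hw : ∀ j, φ (w j) = v j) (M : E →ₗ[ℝ] ℝ) {p : ℝ} (hp : 0 < p)
    (x : (φ ⁻¹' halfOpenParallelepiped v) × (ι → ℕ)) :
    p ^ (-M (φ (toOpenCone φ hw x))) =
      p ^ M (φ x.1) * ∏ j, p ^ (-(((x.2 j : ℝ) + 1) * M (v j))) := by
  have hMx : M (φ (toOpenCone φ hw x)) = ∑ j, ((x.2 j : ℝ) + 1) * M (v j) - M (φ x.1) := by
    simp [toOpenCone, map_sum, map_nsmul, hw, ← Nat.cast_smul_eq_nsmul ℝ]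
  rw [hMx, neg_sub, sub_eq_add_neg, ← Finset.sum_neg_distrib, Real.rpow_add hp,
    Real.rpow_sum_of_pos hp]

theorem hasSum_rpow_neg_openCone (hw : ∀ j, φ (w j) = v j) (hv : LinearIndependent ℝ v)
    [Finite (φ ⁻¹' halfOpenParallelepiped v)] (M : E →ₗ[ℝ] ℝ) (hM : ∀ j, 0 < M (v j))
    {p : ℝ} (hp : 1 < p) :
    HasSum (fun g : {g : G // φ g ∈ openCone v} => p ^ (-M (φ g)))
      ((∑' h : φ ⁻¹' halfOpenParallelepiped v, p ^ M (φ h)) / ∏ j, (p ^ M (v j) - 1)) := by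
  let e := Equiv.ofBijective _ ⟨toOpenCone_injective φ hw hv, toOpenCone_surjective φ hw⟩
  have hprod := HasSum.mul_real
    (Summable.of_finite (f := fun h : φ ⁻¹' halfOpenParallelepiped v => p ^ M (φ h))).hasSum
    (hasSum_pi_prod _ _ fun j => hasSum_rpow_neg_succ_mul hp (hM j))
  rw [← e.hasSum_iff]
  convert hprod using 1
  · exact funext (rpow_neg_toOpenCone φ hw M (zero_lt_one.trans hp))
  · rw [div_eq_mul_inv, Finset.prod_inv_distrib]

end Cone

theorem finite_preimage_intCast_of_isCompact {σ : Type*} [Finite σ] {K : Set (σ → ℝ)}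
    (hK : IsCompact K) : ((Int.castAddHom ℝ).compLeft σ ⁻¹' K).Finite :=
  ((Topology.IsClosedEmbedding.piMap fun _ => Int.isClosedEmbedding_coe_real).isCompact_preimage
    hK).finite_of_discrete

theorem toRn_nonneg {n : ℕ} (k : Fin n → ℕ) : 0 ≤ toRn k := fun i => (k i).cast_nonneg

theorem intCastAddHom_compLeft_natCast {n : ℕ} (k : Fin n → ℕ) :
    (Int.castAddHom ℝ).compLeft (Fin n) (fun i => (k i : ℤ)) = toRn k := by
  ext; simp [toRn]

theorem nonneg_of_intCast_mem {n : ℕ} {S : Set (Fin n → ℝ)} (hS : ∀ x ∈ S, 0 ≤ x)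
    {g : Fin n → ℤ} (hg : (Int.castAddHom ℝ).compLeft (Fin n) g ∈ S) : 0 ≤ g :=
  fun i => Int.cast_nonneg_iff.mp (hS _ hg i)

def natPointsEquivIntPoints {n : ℕ} {S : Set (Fin n → ℝ)} (hS : ∀ x ∈ S, 0 ≤ x) :
    {k : Fin n → ℕ // toRn k ∈ S} ≃
      {g : Fin n → ℤ // (Int.castAddHom ℝ).compLeft (Fin n) g ∈ S} where
  toFun k := ⟨fun i => k.1 i, by rw [intCastAddHom_compLeft_natCast]; exact k.2⟩
  invFun g := ⟨fun i => (g.1 i).toNat, by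
    rw [← intCastAddHom_compLeft_natCast]
    convert g.2 using 3 with i
    exact Int.toNat_of_nonneg (nonneg_of_intCast_mem hS g.2 i)⟩
  left_inv k := by ext; simp
  right_inv g := by
    ext i
    exact Int.toNat_of_nonneg (nonneg_of_intCast_mem hS g.2 i)

theorem cone_series_rational_general (p : ℝ) (hp : 1 < p) (n : ℕ) (r : ℕ)
    (k : Fin r → (Fin n → ℕ))
    (hli : LinearIndependent ℝ (fun j => toRn (k j)))
    (M : (Fin n → ℝ) →ₗ[ℝ] ℝ) (hM : ∀ j, 0 < M (toRn (k j)))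
    (δ : Set (Fin n → ℝ))
    (hδ : δ = {x | ∃ lam : Fin r → ℝ, (∀ j, 0 < lam j) ∧ x = ∑ j, lam j • toRn (k j)})
    (H : Set (Fin n → ℤ))
    (hH : H = {h | ∃ lam : Fin r → ℝ, (∀ j, 0 ≤ lam j ∧ lam j < 1) ∧
      (fun i => (h i : ℝ)) = ∑ j, lam j • toRn (k j)}) :
    H.Finite ∧
    HasSum (fun k' : {k' : Fin n → ℕ // toRn k' ∈ δ} => p ^ (-(M (toRn k'.1))))
      ((∑' h : H, p ^ (M (fun i => ((h : Fin n → ℤ) i : ℝ)))) /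
        ∏ j, (p ^ (M (toRn (k j))) - 1)) := by
  set φ := (Int.castAddHom ℝ).compLeft (Fin n)
  replace hH : H = φ ⁻¹' halfOpenParallelepiped (fun j => toRn (k j)) := hH
  replace hδ : δ = openCone (fun j => toRn (k j)) := hδ
  subst hH hδ
  have hHfin := (finite_preimage_intCast_of_isCompact (isCompact_parallelepiped _)).subset
    (Set.preimage_mono (halfOpenParallelepiped_subset_parallelepiped (fun j => toRn (k j))))
  have : Finite (φ ⁻¹' halfOpenParallelepiped (fun j => toRn (k j))) := hHfin
  have hcone : ∀ x ∈ openCone (fun j => toRn (k j)), 0 ≤ x := fun x =>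
    openCone_nonneg fun j => toRn_nonneg (k j)
  refine ⟨hHfin, ?_⟩
  have hsum := hasSum_rpow_neg_openCone φ (fun j => intCastAddHom_compLeft_natCast (k j)) hli M
    hM hp
  rw [← (natPointsEquivIntPoints hcone).hasSum_iff] at hsum
  simp only [φ, Function.comp_def, natPointsEquivIntPoints, Equiv.coe_fn_mk,
    intCastAddHom_compLeft_natCast] at hsum
  exact hsum

theorem cone_series_rational (p : ℝ) (hp : 1 < p) (n : ℕ) (hn : 1 ≤ n) (r : ℕ)
    (k : Fin r → (Fin n → ℕ)) (hknz : ∀ j, k j ≠ 0)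
    (hli : LinearIndependent ℝ (fun j => toRn (k j)))
    (M : (Fin n → ℝ) →ₗ[ℝ] ℝ) (hM : ∀ j, 0 < M (toRn (k j)))
    (δ : Set (Fin n → ℝ))
    (hδ : δ = {x | ∃ lam : Fin r → ℝ, (∀ j, 0 < lam j) ∧ x = ∑ j, lam j • toRn (k j)})
    (H : Set (Fin n → ℤ))
    (hH : H = {h | ∃ lam : Fin r → ℝ, (∀ j, 0 ≤ lam j ∧ lam j < 1) ∧
      (fun i => (h i : ℝ)) = ∑ j, lam j • toRn (k j)}) :
    H.Finite ∧
    HasSum (fun k' : {k' : Fin n → ℕ // toRn k' ∈ δ} => p ^ (-(M (toRn k'.1))))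
      ((∑' h : H, p ^ (M (fun i => ((h : Fin n → ℤ) i : ℝ)))) /
        ∏ j, (p ^ (M (toRn (k j))) - 1)) :=
  cone_series_rational_general p hp n r k hli M hM δ hδ H hH
end

section
/- Let k_1,…,k_r ∈ ℝ_{≥0}^n∖{0} and let Δ = {λ_1 k_1 + ⋯ + λ_r k_r : λ_i ∈ ℝ, λ_i > 0 for all i} be the cone strictly positively spanned by k_1,…,k_r. Then there exists a finite partition of Δ into cones Δ_1,…,Δ_m such that each Δ_i is strictly positively spanned by an ℝ-linearly independent subset of {k_1,…,k_r}. -/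
/-! Simplicial decomposition of a strictly positively spanned cone without
introducing new rays. -/

open Finset


lemma lex_asymm_aux {m : ℕ} {a b : Fin m → ℝ}
    (h1 : ∃ i, a i < b i ∧ ∀ j < i, a j = b j)
    (h2 : ∃ i, b i < a i ∧ ∀ j < i, b j = a j) : False := by
  obtain ⟨i, hi, hji⟩ := h1
  obtain ⟨i', hi', hji'⟩ := h2
  rcases lt_trichotomy i i' with h | h | h
  · exact absurd (hji' i h).symm (ne_of_lt hi)
  · subst h; exact lt_asymm hi hi'
  · exact absurd (hji i' h) (ne_of_gt hi')

lemma lexmax_aux {r : ℕ} (d : ℕ) :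
    ∀ i : ℕ, i + d = r → ∀ s : Set (Fin r → ℝ), IsCompact s → s.Nonempty →
    ∃ μ ∈ s, ∀ lam ∈ s,
      (∀ j : Fin r, i ≤ (j : ℕ) → lam j = μ j) ∨
      ∃ i' : Fin r, i ≤ (i' : ℕ) ∧ lam i' < μ i' ∧
        ∀ j : Fin r, i ≤ (j : ℕ) → (j : ℕ) < (i' : ℕ) → lam j = μ j := by
  induction d with
  | zero =>
    intro i hi s _ hne
    obtain ⟨μ, hμ⟩ := hne
    refine ⟨μ, hμ, fun lam _ => Or.inl fun j hj => absurd j.isLt (by omega)⟩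
  | succ d ih =>
    intro i hi s hs hne
    have hir : i < r := by omega
    have fi : Fin r := ⟨i, hir⟩
    obtain ⟨z, hz, hmax⟩ := hs.exists_isMaxOn hne (continuous_apply (⟨i, hir⟩ : Fin r)).continuousOn
    set s' : Set (Fin r → ℝ) := s ∩ {lam | lam ⟨i, hir⟩ = z ⟨i, hir⟩} with hs'def
    have hs'c : IsCompact s' :=
      hs.inter_right (isClosed_eq (continuous_apply _) continuous_const)
    have hs'ne : s'.Nonempty := ⟨z, hz, rfl⟩
    obtain ⟨μ, hμs', hμ⟩ := ih (i + 1) (by omega) s' hs'c hs'ne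
    have hμfi : μ ⟨i, hir⟩ = z ⟨i, hir⟩ := hμs'.2
    refine ⟨μ, hμs'.1, fun lam hlam => ?_⟩
    by_cases hc : lam ⟨i, hir⟩ = z ⟨i, hir⟩
    · have hlam' : lam ∈ s' := ⟨hlam, hc⟩
      rcases hμ lam hlam' with h | ⟨i', h1, h2, h3⟩
      · left
        intro j hj
        rcases eq_or_lt_of_le hj with he | hlt
        · have hjfi : j = ⟨i, hir⟩ := Fin.ext he.symm
          rw [hjfi, hc, hμfi]
        · exact h j hlt
      · right
        refine ⟨i', by omega, h2, fun j hj hji' => ?_⟩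
        rcases eq_or_lt_of_le hj with he | hlt
        · have hjfi : j = ⟨i, hir⟩ := Fin.ext he.symm
          rw [hjfi, hc, hμfi]
        · exact h3 j hlt hji'
    · right
      have hle : lam ⟨i, hir⟩ ≤ z ⟨i, hir⟩ := hmax hlam
      have hlt : lam ⟨i, hir⟩ < z ⟨i, hir⟩ := lt_of_le_of_ne hle hc
      refine ⟨⟨i, hir⟩, le_rfl, by rw [hμfi]; exact hlt, fun j hj hji => ?_⟩
      have hji' : (j : ℕ) < i := hji
      omega

section SimpDecomp
variable {n r : ℕ} (k : Fin r → (Fin n → ℝ))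
variable {n r : ℕ} (k : Fin r → (Fin n → ℝ))

def Pset (x : Fin n → ℝ) : Set (Fin r → ℝ) :=
  {lam | (∀ j, 0 ≤ lam j) ∧ ∑ j, lam j • k j = x}

def coneOf (S : Finset (Fin r)) : Set (Fin n → ℝ) :=
  {x | ∃ lam : S → ℝ, (∀ j, 0 < lam j) ∧ x = ∑ j, lam j • k j}

def Good (S : Finset (Fin r)) : Prop :=
  ∀ d : Fin r → ℝ, ∑ j, d j • k j = 0 → (∀ j, j ∉ S → 0 ≤ d j) →
    (∀ j, d j = 0) ∨ ∃ i, d i < 0 ∧ ∀ j < i, d j = 0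

lemma sum_eq_sum_subtype (S : Finset (Fin r)) (b : Fin r → ℝ)
    (hb : ∀ j ∉ S, b j = 0) :
    ∑ j, b j • k j = ∑ j : S, b j • k j := by
  rw [Finset.sum_coe_sort S (fun j => b j • k j)]
  exact (Finset.sum_subset S.subset_univ
    (fun x _ hx => by rw [hb x hx, zero_smul])).symm

lemma pset_compact (hk : ∀ j, k j ∈ {x : Fin n → ℝ | ∀ i, 0 ≤ x i})
    (hknz : ∀ j, k j ≠ 0) (x : Fin n → ℝ) : IsCompact (Pset k x) := by
  classical
  have hcoord : ∀ j, ∃ i, 0 < k j i := by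
    intro j
    by_contra h
    push_neg at h
    exact hknz j (funext fun i => le_antisymm (h i) (hk j i))
  choose idx hidx using hcoord
  have hsub : Pset k x ⊆ Set.pi Set.univ
      (fun j => Set.Icc 0 (x (idx j) / k j (idx j))) := by
    rintro lam ⟨h0, hsum⟩ j _
    refine ⟨h0 j, ?_⟩
    have hxi : lam j * k j (idx j) ≤ x (idx j) := by
      have h1 : (∑ j', lam j' • k j') (idx j) = x (idx j) := by rw [hsum]
      rw [Finset.sum_apply] at h1
      calc lam j * k j (idx j)
          ≤ ∑ j', lam j' * k j' (idx j) :=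
            Finset.single_le_sum
              (fun j' _ => mul_nonneg (h0 j') (hk j' (idx j))) (Finset.mem_univ j)
        _ = x (idx j) := by simpa [Pi.smul_apply, smul_eq_mul] using h1
    exact (le_div_iff₀ (hidx j)).2 hxi
  have hclosed : IsClosed (Pset k x) := by
    have h1 : IsClosed {lam : Fin r → ℝ | ∀ j, 0 ≤ lam j} := by
      have he : {lam : Fin r → ℝ | ∀ j, 0 ≤ lam j} = ⋂ j, {lam | 0 ≤ lam j} := by
        ext lam; simp [Set.mem_iInter]
      rw [he]
      exact isClosed_iInter fun j => isClosed_le continuous_const (continuous_apply j)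
    have h2 : IsClosed {lam : Fin r → ℝ | ∑ j, lam j • k j = x} :=
      isClosed_eq (continuous_finset_sum _ fun j _ =>
        (continuous_apply j).smul continuous_const) continuous_const
    exact h1.inter h2
  exact (isCompact_univ_pi fun j => isCompact_Icc).of_isClosed_subset hclosed hsub

lemma exists_lexmax (hk : ∀ j, k j ∈ {x : Fin n → ℝ | ∀ i, 0 ≤ x i})
    (hknz : ∀ j, k j ≠ 0) (x : Fin n → ℝ) (hne : (Pset k x).Nonempty) :
    ∃ μ ∈ Pset k x, ∀ lam ∈ Pset k x,
      lam = μ ∨ ∃ i, lam i < μ i ∧ ∀ j < i, lam j = μ j := by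
  obtain ⟨μ, hμ, hmax⟩ := lexmax_aux r 0 (by omega) (Pset k x) (pset_compact k hk hknz x) hne
  refine ⟨μ, hμ, fun lam hlam => ?_⟩
  rcases hmax lam hlam with h | ⟨i', _, h2, h3⟩
  · exact Or.inl (funext fun j => h j (Nat.zero_le _))
  · exact Or.inr ⟨i', h2, fun j hj => h3 j (Nat.zero_le _) hj⟩

-- G1 : Good S makes the S-supported representation a lex max
lemma good_lexmax {S : Finset (Fin r)} (hS : Good k S) (b : Fin r → ℝ)
    (hb0 : ∀ j ∉ S, b j = 0) :
    ∀ lam ∈ Pset k (∑ j, b j • k j),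
      lam = b ∨ ∃ i, lam i < b i ∧ ∀ j < i, lam j = b j := by
  rintro lam ⟨hlam0, hlamsum⟩
  have hd : ∑ j, (lam j - b j) • k j = 0 := by
    simp only [sub_smul, Finset.sum_sub_distrib, hlamsum, sub_self]
  have hoff : ∀ j, j ∉ S → 0 ≤ lam j - b j := by
    intro j hj; rw [hb0 j hj, sub_zero]; exact hlam0 j
  rcases hS _ hd hoff with h | ⟨i, hi, hj⟩
  · left; funext j; have := h j; linarith
  · right
    exact ⟨i, by linarith, fun j hj' => by have := hj j hj'; linarith⟩

-- G2 : support of a lexmax is Good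
lemma lexmax_good (x : Fin n → ℝ) (μ : Fin r → ℝ) (hμ : μ ∈ Pset k x)
    (hmax : ∀ lam ∈ Pset k x, lam = μ ∨ ∃ i, lam i < μ i ∧ ∀ j < i, lam j = μ j)
    (S : Finset (Fin r)) (hSmem : ∀ j, j ∈ S ↔ 0 < μ j) : Good k S := by
  classical
  intro d hd hdpos
  by_cases hall : ∀ j, d j = 0
  · exact Or.inl hall
  push_neg at hall
  obtain ⟨j0, hj0⟩ := hall
  have hTpos : ∀ j, d j < 0 → 0 < μ j := by
    intro j hj
    by_contra h
    have : j ∉ S := fun hjS => h ((hSmem j).1 hjS)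
    linarith [hdpos j this]
  set T : Finset (Fin r) := Finset.univ.filter (fun j => d j < 0) with hT
  by_cases hTne : T.Nonempty
  · obtain ⟨jm, hjmT, hjmmin⟩ := Finset.exists_min_image T (fun j => μ j / (-d j)) hTne
    have hjmd : d jm < 0 := (Finset.mem_filter.1 hjmT).2
    have hjmμ : 0 < μ jm := hTpos jm hjmd
    set ε : ℝ := μ jm / (-d jm) with hε
    have hε0 : 0 < ε := div_pos hjmμ (by linarith)
    have hmem : (fun j => μ j + ε * d j) ∈ Pset k x := by
      constructor
      · intro j
        show 0 ≤ μ j + ε * d j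
        by_cases hj : d j < 0
        · have hjT : j ∈ T := Finset.mem_filter.2 ⟨Finset.mem_univ j, hj⟩
          have hle : ε ≤ μ j / (-d j) := hjmmin j hjT
          have : ε * (-d j) ≤ μ j := (le_div_iff₀ (by linarith)).1 hle
          nlinarith
        · push_neg at hj
          have := hμ.1 j
          nlinarith
      · have : ∑ j, (μ j + ε * d j) • k j
            = (∑ j, μ j • k j) + ε • ∑ j, d j • k j := by
          rw [Finset.smul_sum]
          rw [← Finset.sum_add_distrib]
          refine Finset.sum_congr rfl fun j _ => ?_
          rw [add_smul, smul_smul]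
        rw [this, hd, smul_zero, add_zero, hμ.2]
    rcases hmax _ hmem with h | ⟨i, hlt, heq⟩
    · exfalso
      have h' : μ jm + ε * d jm = μ jm := congrFun h jm
      nlinarith
    · right
      refine ⟨i, ?_, fun j hj => ?_⟩
      · have hlt' : μ i + ε * d i < μ i := hlt
        nlinarith
      · have h' : μ j + ε * d j = μ j := heq j hj
        have h2 : ε * d j = 0 := by linarith
        rcases mul_eq_zero.1 h2 with h | h
        · linarith
        · exact h
  · exfalso
    have hdnn : ∀ j, 0 ≤ d j := by
      intro j
      by_contra h
      push_neg at h
      exact hTne ⟨j, Finset.mem_filter.2 ⟨Finset.mem_univ j, h⟩⟩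
    have hmem : (fun j => μ j + d j) ∈ Pset k x := by
      constructor
      · intro j
        show 0 ≤ μ j + d j
        have := hμ.1 j; have := hdnn j; linarith
      · have : ∑ j, (μ j + d j) • k j = (∑ j, μ j • k j) + ∑ j, d j • k j := by
          rw [← Finset.sum_add_distrib]
          exact Finset.sum_congr rfl fun j _ => add_smul _ _ _
        rw [this, hd, add_zero, hμ.2]
    rcases hmax _ hmem with h | ⟨i, hlt, _⟩
    · have h' : μ j0 + d j0 = μ j0 := congrFun h j0
      exact hj0 (by linarith)
    · have hlt' : μ i + d i < μ i := hlt
      linarith [hdnn i]variable {n r : ℕ} (k : Fin r → (Fin n → ℝ))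

-- G3 : Good implies linear independence
lemma good_linIndep (S : Finset (Fin r)) (hS : Good k S) :
    LinearIndependent ℝ (fun j : S => k j) := by
  classical
  rw [Fintype.linearIndependent_iff]
  intro g hg
  set d : Fin r → ℝ := fun j => if h : j ∈ S then g ⟨j, h⟩ else 0 with hdd
  have hdoff : ∀ j ∉ S, d j = 0 := fun j hj => dif_neg hj
  have hdval : ∀ j : S, d j = g j := fun j => dif_pos j.2
  have hdsum : ∑ j, d j • k j = 0 := by
    rw [sum_eq_sum_subtype k S d hdoff]
    rw [show (∑ j : S, d j • k j) = ∑ j : S, g j • k j from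
      Finset.sum_congr rfl fun j _ => by rw [hdval j]]
    exact hg
  have hall : ∀ j, d j = 0 := by
    rcases hS d hdsum (fun j hj => le_of_eq (hdoff j hj).symm) with h | h1
    · exact h
    · rcases hS (fun j => -d j)
        (by simp only [neg_smul, Finset.sum_neg_distrib, hdsum, neg_zero])
        (fun j hj => by show (0:ℝ) ≤ -d j; rw [hdoff j hj, neg_zero]) with h | h2
      · intro j; have := h j; linarith
      · exfalso
        refine lex_asymm_aux (a := d) (b := fun _ => (0:ℝ)) ?_ ?_
        · obtain ⟨i, hi1, hi2⟩ := h1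
          exact ⟨i, hi1, hi2⟩
        · obtain ⟨i, hi1, hi2⟩ := h2
          exact ⟨i, by simpa using hi1, fun j hj => (show d j = 0 by simpa using hi2 j hj).symm⟩
  intro i
  rw [← hdval i]
  exact hall i

-- D : a cone meeting Δ is inside Δ
lemma cone_subset_delta (S : Finset (Fin r)) (x : Fin n → ℝ)
    (hxC : x ∈ coneOf k S) (lamx : Fin r → ℝ) (hlamx : ∀ j, 0 < lamx j)
    (hx : x = ∑ j, lamx j • k j) :
    ∀ y ∈ coneOf k S, ∃ lam : Fin r → ℝ, (∀ j, 0 < lam j) ∧ y = ∑ j, lam j • k j := by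
  classical
  obtain ⟨a, ha, hxa⟩ := hxC
  rintro y ⟨b, hb, hyb⟩
  obtain ⟨t, ht, htb⟩ : ∃ t : ℝ, 0 < t ∧ ∀ j : S, t * a j < b j := by
    by_cases hS : Nonempty {j // j ∈ S}
    · set m : ℝ := Finset.univ.inf' Finset.univ_nonempty (fun j : S => b j / a j) with hm
      have hm0 : 0 < m := by
        rw [Finset.lt_inf'_iff]
        intro j _
        exact div_pos (hb j) (ha j)
      refine ⟨m / 2, by linarith, fun j => ?_⟩
      have h1 : m ≤ b j / a j := Finset.inf'_le _ (Finset.mem_univ j)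
      have h2 : m / 2 < b j / a j := by linarith
      exact (lt_div_iff₀ (ha j)).1 h2
    · exact ⟨1, one_pos, fun j => absurd ⟨j⟩ hS⟩
  set c : Fin r → ℝ :=
    fun j => t * lamx j + (if h : j ∈ S then b ⟨j, h⟩ - t * a ⟨j, h⟩ else 0) with hc
  have hcpos : ∀ j, 0 < c j := by
    intro j
    have h1 : 0 < t * lamx j := mul_pos ht (hlamx j)
    by_cases h : j ∈ S
    · have := htb ⟨j, h⟩
      show 0 < t * lamx j + _
      rw [dif_pos h]
      linarith
    · show 0 < t * lamx j + _
      rw [dif_neg h]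
      linarith
  refine ⟨c, hcpos, ?_⟩
  have hsplit : ∑ j, c j • k j
      = t • (∑ j, lamx j • k j)
        + ∑ j, (if h : j ∈ S then b ⟨j, h⟩ - t * a ⟨j, h⟩ else 0) • k j := by
    rw [Finset.smul_sum, ← Finset.sum_add_distrib]
    refine Finset.sum_congr rfl fun j _ => ?_
    rw [add_smul, smul_smul]
  have hsecond : ∑ j, (if h : j ∈ S then b ⟨j, h⟩ - t * a ⟨j, h⟩ else 0) • k j
      = y - t • x := by
    rw [sum_eq_sum_subtype k S _ (fun j hj => dif_neg hj)]
    have : ∀ j : S, (if h : (j:Fin r) ∈ S then b ⟨j, h⟩ - t * a ⟨j, h⟩ else 0) • k j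
        = b j • k j - (t * a j) • k j := by
      intro j
      rw [dif_pos j.2, sub_smul]
    rw [Finset.sum_congr rfl fun j _ => this j]
    rw [Finset.sum_sub_distrib]
    congr 1
    · exact hyb.symm
    · rw [hxa, Finset.smul_sum]
      exact Finset.sum_congr rfl fun j _ => by rw [smul_smul]
  rw [hsplit, hsecond, ← hx]
  abel

-- E : two good cones intersecting are equal
lemma cones_eq (S T : Finset (Fin r)) (hS : Good k S) (hT : Good k T)
    (y : Fin n → ℝ) (hyS : y ∈ coneOf k S) (hyT : y ∈ coneOf k T) : S = T := by
  classical
  obtain ⟨bs, hbs, hybs⟩ := hyS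
  obtain ⟨bt, hbt, hybt⟩ := hyT
  set dS : Fin r → ℝ := fun j => if h : j ∈ S then bs ⟨j, h⟩ else 0 with hdS
  set dT : Fin r → ℝ := fun j => if h : j ∈ T then bt ⟨j, h⟩ else 0 with hdT
  have hdSoff : ∀ j ∉ S, dS j = 0 := fun j hj => dif_neg hj
  have hdToff : ∀ j ∉ T, dT j = 0 := fun j hj => dif_neg hj
  have hdSsum : ∑ j, dS j • k j = y := by
    rw [sum_eq_sum_subtype k S dS hdSoff, hybs]
    exact Finset.sum_congr rfl fun j _ => by rw [show dS j = bs j from dif_pos j.2]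
  have hdTsum : ∑ j, dT j • k j = y := by
    rw [sum_eq_sum_subtype k T dT hdToff, hybt]
    exact Finset.sum_congr rfl fun j _ => by rw [show dT j = bt j from dif_pos j.2]
  have hdS0 : ∀ j, 0 ≤ dS j := by
    intro j
    by_cases h : j ∈ S
    · rw [show dS j = bs ⟨j,h⟩ from dif_pos h]; exact le_of_lt (hbs ⟨j, h⟩)
    · rw [hdSoff j h]
  have hdT0 : ∀ j, 0 ≤ dT j := by
    intro j
    by_cases h : j ∈ T
    · rw [show dT j = bt ⟨j,h⟩ from dif_pos h]; exact le_of_lt (hbt ⟨j, h⟩)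
    · rw [hdToff j h]
  have hmemT : dT ∈ Pset k (∑ j, dS j • k j) := by
    rw [hdSsum]; exact ⟨hdT0, hdTsum⟩
  have hmemS : dS ∈ Pset k (∑ j, dT j • k j) := by
    rw [hdTsum]; exact ⟨hdS0, hdSsum⟩
  have h1 := good_lexmax k hS dS hdSoff dT hmemT
  have h2 := good_lexmax k hT dT hdToff dS hmemS
  have heq : dS = dT := by
    rcases h1 with h | h1
    · exact h.symm
    rcases h2 with h | h2
    · exact h
    exact absurd (lex_asymm_aux h1 h2) (fun f => f)
  ext j
  constructor
  · intro hj
    by_contra hjT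
    have : dS j = 0 := heq ▸ hdToff j hjT
    rw [show dS j = bs ⟨j, hj⟩ from dif_pos hj] at this
    exact absurd this (ne_of_gt (hbs ⟨j, hj⟩))
  · intro hj
    by_contra hjS
    have : dT j = 0 := heq ▸ hdSoff j hjS
    rw [show dT j = bt ⟨j, hj⟩ from dif_pos hj] at this
    exact absurd this (ne_of_gt (hbt ⟨j, hj⟩))
end SimpDecomp

theorem simplicial_decomposition (n r : ℕ) (k : Fin r → (Fin n → ℝ))
    (hk : ∀ j, k j ∈ {x : Fin n → ℝ | ∀ i, 0 ≤ x i}) (hknz : ∀ j, k j ≠ 0)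
    (Δ : Set (Fin n → ℝ))
    (hΔ : Δ = {x | ∃ lam : Fin r → ℝ, (∀ j, 0 < lam j) ∧ x = ∑ j, lam j • k j}) :
    ∃ parts : Finset (Set (Fin n → ℝ)),
      (∀ A ∈ parts, ∀ B ∈ parts, A ≠ B → A ∩ B = ∅) ∧
      ⋃₀ (parts : Set (Set (Fin n → ℝ))) = Δ ∧
      ∀ Δ' ∈ parts, ∃ S : Finset (Fin r),
        LinearIndependent ℝ (fun j : S => k j) ∧
        Δ' = {x | ∃ lam : S → ℝ, (∀ j, 0 < lam j) ∧ x = ∑ j, lam j • k j} := by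
  classical
  set parts : Finset (Set (Fin n → ℝ)) :=
    (Finset.univ.filter fun S : Finset (Fin r) =>
      Good k S ∧ (coneOf k S ∩ Δ).Nonempty).image (coneOf k) with hparts
  have hmem : ∀ A ∈ parts, ∃ S : Finset (Fin r),
      Good k S ∧ (coneOf k S ∩ Δ).Nonempty ∧ A = coneOf k S := by
    intro A hA
    rw [hparts, Finset.mem_image] at hA
    obtain ⟨S, hS, hSA⟩ := hA
    rw [Finset.mem_filter] at hS
    exact ⟨S, hS.2.1, hS.2.2, hSA.symm⟩
  refine ⟨parts, ?_, ?_, ?_⟩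
  · -- pairwise disjoint
    intro A hA B hB hAB
    obtain ⟨S, hSg, _, rfl⟩ := hmem A hA
    obtain ⟨T, hTg, _, rfl⟩ := hmem B hB
    by_contra hne
    obtain ⟨y, hyS, hyT⟩ := Set.nonempty_iff_ne_empty.2 hne
    exact hAB (congrArg (coneOf k) (cones_eq k S T hSg hTg y hyS hyT))
  · -- union is Δ
    apply Set.Subset.antisymm
    · rintro x ⟨A, hA, hxA⟩
      obtain ⟨S, _, ⟨x0, hx0C, hx0Δ⟩, rfl⟩ := hmem A hA
      rw [hΔ] at hx0Δ
      obtain ⟨lamx, hlamx, hx0⟩ := hx0Δ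
      rw [hΔ]
      exact cone_subset_delta k S x0 hx0C lamx hlamx hx0 x hxA
    · intro x hxΔ
      have hxΔ' := hxΔ
      rw [hΔ] at hxΔ'
      obtain ⟨lam, hlam, hxsum⟩ := hxΔ'
      have hPne : (Pset k x).Nonempty :=
        ⟨lam, fun j => le_of_lt (hlam j), hxsum.symm⟩
      obtain ⟨μ, hμ, hmax⟩ := exists_lexmax k hk hknz x hPne
      set S : Finset (Fin r) := Finset.univ.filter (fun j => 0 < μ j) with hSdef
      have hSmem : ∀ j, j ∈ S ↔ 0 < μ j := by
        intro j; rw [hSdef, Finset.mem_filter]; simp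
      have hgood : Good k S := lexmax_good k x μ hμ hmax S hSmem
      have hμoff : ∀ j ∉ S, μ j = 0 := by
        intro j hj
        have h1 : ¬ 0 < μ j := fun h => hj ((hSmem j).2 h)
        exact le_antisymm (not_lt.1 h1) (hμ.1 j)
      have hxC : x ∈ coneOf k S := by
        refine ⟨fun j => μ j, fun j => (hSmem j).1 j.2, ?_⟩
        rw [← sum_eq_sum_subtype k S μ hμoff]
        exact hμ.2.symm
      have hSparts : coneOf k S ∈ parts := by
        rw [hparts, Finset.mem_image]
        refine ⟨S, ?_, rfl⟩
        rw [Finset.mem_filter]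
        exact ⟨Finset.mem_univ S, hgood, ⟨x, hxC, hxΔ⟩⟩
      exact ⟨coneOf k S, hSparts, hxC⟩
  · -- simplicial pieces
    intro Δ' hΔ'
    obtain ⟨S, hSg, _, rfl⟩ := hmem Δ' hΔ'
    exact ⟨S, good_linIndep k S hSg, rfl⟩
end

section
/- Let Δ ⊂ ℝ^n be a rational simplicial cone, i.e. Δ = {λ_1 k_1 + ⋯ + λ_r k_r : λ_i ∈ ℝ, λ_i > 0 for all i} for some ℝ-linearly independent vectors k_1,…,k_r ∈ ℤ^n. Then there exists a finite partition of Δ into simple cones, i.e. cones of the form {μ_1 v_1 + ⋯ + μ_m v_m : μ_i ∈ ℝ, μ_i > 0 for all i} where v_1,…,v_m are part of a ℤ-module basis of ℤ^n. -/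
/-!
Induction on the number of lattice points in the half-open parallelepiped
`{∑ μⱼ kⱼ : 0 < μⱼ ≤ 1}`, which always contains `∑ kⱼ`. If that is the only one, every lattice
point of the real span of the `kⱼ` reduces modulo `ℤk` to it, so `ℤk` is saturated, `ℤⁿ ⧸ ℤk` is
free and `k` extends to a basis of `ℤⁿ`: the cone is simple. Otherwise another lattice point
gives `w = ∑ λⱼ kⱼ` with `0 ≤ λⱼ < 1`, not all zero, and the stellar subdivision at `w`
partitions the open cone into the relatively open cones spanned by `w` and `{kᵢ : i ∈ S}`, for
the `S` that contain every `i` with `λᵢ = 0` but not every `i`. Reducing coordinates modulo `1`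
injects the parallelepiped points of each piece into those of `k` other than `∑ kⱼ`.
-/

open Finset Module Submodule

theorem exists_basis_sum_inl_eq_of_free_quotient {κ R M : Type*} [Fintype κ] [Ring R]
    [AddCommGroup M] [Module R M] {v : κ → M} (hv : LinearIndependent R v)
    [Module.Free R (M ⧸ span R (Set.range v))] :
    ∃ b : Basis (κ ⊕ Free.ChooseBasisIndex R (M ⧸ span R (Set.range v))) R M,
      ∀ j, b (Sum.inl j) = v j := by
  classical
  have hexact : Function.Exact (Fintype.linearCombination R v) (span R (Set.range v)).mkQ := by
    rw [LinearMap.exact_iff, ker_mkQ, Fintype.range_linearCombination]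
  obtain ⟨l, hl⟩ := (span R (Set.range v)).mkQ.exists_rightInverse_of_surjective (range_mkQ _)
  set e := hexact.splitSurjectiveEquiv hv.fintypeLinearCombination_injective ⟨l, hl⟩
  have he := e.2.1
  refine ⟨((Pi.basisFun R κ).prod (Free.chooseBasis R _)).map e.1.symm, fun j => ?_⟩
  simpa using (LinearMap.congr_fun he (Pi.single j 1)).symm

theorem exists_basis_extending_of_isTorsionFree_quotient {ι κ R : Type*} [Fintype ι] [Fintype κ]
    [CommRing R] [IsDomain R] [IsPrincipalIdealRing R] {v : κ → ι → R} (hv : LinearIndependent R v)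
    [IsTorsionFree R ((ι → R) ⧸ span R (Set.range v))] :
    ∃ (b : Basis ι R (ι → R)) (e : κ ↪ ι), ∀ j, b (e j) = v j := by
  obtain ⟨b, hb⟩ := exists_basis_sum_inl_eq_of_free_quotient hv
  have hcard := (finrank_eq_card_basis b).symm.trans (finrank_eq_card_basis (Pi.basisFun R ι))
  let σ := Fintype.equivOfCardEq hcard
  exact ⟨b.reindex σ, ⟨σ ∘ Sum.inl, σ.injective.comp Sum.inl_injective⟩, fun j => by simp [hb]⟩

namespace RationalCone

variable {ι κ : Type*}

def castVec : (ι → ℤ) →ₗ[ℤ] ι → ℝ := (Algebra.linearMap ℤ ℝ).compLeft ι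

@[simp] lemma castVec_apply (u : ι → ℤ) (i : ι) : castVec u i = u i := rfl

lemma castVec_injective : Function.Injective (castVec : (ι → ℤ) → ι → ℝ) :=
  fun _ _ h => funext fun i => Int.cast_injective (α := ℝ) (congrFun h i)

section

variable [Fintype κ]

lemma castVec_sub_sum_zsmul {k : κ → ι → ℤ} {u : ι → ℤ} {μ : κ → ℝ}
    (hu : castVec u = ∑ j, μ j • castVec (k j)) (n : κ → ℤ) :
    castVec (u - ∑ j, n j • k j) = ∑ j, (μ j - n j) • castVec (k j) := by
  simp only [map_sub, map_sum, map_zsmul, hu, sub_smul, sum_sub_distrib, Int.cast_smul_eq_zsmul]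

lemma castVec_sub_sum_toIocDiv {k : κ → ι → ℤ} {u : ι → ℤ} {μ : κ → ℝ}
    (hu : castVec u = ∑ j, μ j • castVec (k j)) :
    castVec (u - ∑ j, toIocDiv one_pos 0 (μ j) • k j) =
      ∑ j, toIocMod one_pos 0 (μ j) • castVec (k j) := by
  simp only [castVec_sub_sum_zsmul hu, ← self_sub_toIocDiv_zsmul, Int.smul_one_eq_cast]

lemma castVec_sub_sum_toIcoDiv {k : κ → ι → ℤ} {u : ι → ℤ} {μ : κ → ℝ}
    (hu : castVec u = ∑ j, μ j • castVec (k j)) :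
    castVec (u - ∑ j, toIcoDiv one_pos 0 (μ j) • k j) =
      ∑ j, toIcoMod one_pos 0 (μ j) • castVec (k j) := by
  simp only [castVec_sub_sum_zsmul hu, ← self_sub_toIcoDiv_zsmul, Int.smul_one_eq_cast]

def combinations (P : ℝ → Prop) (v : κ → ι → ℤ) : Set (ι → ℝ) :=
  {x | ∃ μ : κ → ℝ, (∀ j, P (μ j)) ∧ x = ∑ j, μ j • castVec (v j)}

def openCone (v : κ → ι → ℤ) : Set (ι → ℝ) := combinations (0 < ·) v

def parallelepipedPoints (v : κ → ι → ℤ) : Set (ι → ℤ) :=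
  castVec ⁻¹' combinations (· ∈ Set.Ioc 0 1) v

lemma mem_parallelepipedPoints {v : κ → ι → ℤ} {u : ι → ℤ} :
    u ∈ parallelepipedPoints v ↔
      ∃ μ : κ → ℝ, (∀ j, μ j ∈ Set.Ioc 0 1) ∧ castVec u = ∑ j, μ j • castVec (v j) :=
  Iff.rfl

lemma combinations_comp_equiv {κ' : Type*} [Fintype κ'] (P : ℝ → Prop) (v : κ → ι → ℤ)
    (σ : κ' ≃ κ) : combinations P (v ∘ σ) = combinations P v := by
  ext x
  constructor
  · rintro ⟨μ, hμ, rfl⟩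
    exact ⟨μ ∘ σ.symm, fun j => hμ _, (σ.symm.sum_comp _).symm.trans (by simp)⟩
  · rintro ⟨μ, hμ, rfl⟩
    exact ⟨μ ∘ σ, fun j => hμ _, (σ.sum_comp _).symm⟩

lemma sum_mem_parallelepipedPoints (v : κ → ι → ℤ) : ∑ j, v j ∈ parallelepipedPoints v :=
  ⟨fun _ => 1, fun _ => ⟨one_pos, le_rfl⟩, by simp⟩

lemma parallelepipedPoints_finite [Fintype ι] (v : κ → ι → ℤ) :
    (parallelepipedPoints v).Finite := by
  classical
  refine (Set.finite_Icc (-fun i => ∑ j, |v j i|) fun i => ∑ j, |v j i|).subset ?_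
  rintro u ⟨μ, hμ, hu⟩
  have hbound : ∀ i, |u i| ≤ ∑ j, |v j i| := fun i => by
    have hui : (u i : ℝ) = ∑ j, μ j * v j i := by simpa using congrFun hu i
    have : |(u i : ℝ)| ≤ ∑ j, |(v j i : ℝ)| := hui ▸ (abs_sum_le_sum_abs _ _).trans
      (sum_le_sum fun j _ => by
        rw [abs_mul]
        exact mul_le_of_le_one_left (abs_nonneg _) (abs_le.2 ⟨by linarith [(hμ j).1], (hμ j).2⟩))
    exact_mod_cast this
  exact ⟨fun i => neg_le_of_abs_le (hbound i), fun i => le_of_abs_le (hbound i)⟩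

end

def IsSimpleCone (C : Set (ι → ℝ)) : Prop :=
  ∃ (m : ℕ) (v : Fin m → ι → ℤ) (b : Basis ι ℤ (ι → ℤ)) (e : Fin m ↪ ι),
    (∀ i, v i = b (e i)) ∧ C = openCone v

section

variable [Fintype κ] {k : κ → ι → ℤ}

lemma mem_span_of_castVec_mem_span (hB : parallelepipedPoints k ⊆ {∑ j, k j}) {u : ι → ℤ}
    (hu : castVec u ∈ span ℝ (Set.range fun j => castVec (k j))) :
    u ∈ span ℤ (Set.range k) := by
  obtain ⟨μ, hμ⟩ := (mem_span_range_iff_exists_fun ℝ).1 hu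
  have hred : u - ∑ j, toIocDiv one_pos 0 (μ j) • k j = ∑ j, k j :=
    hB <| mem_parallelepipedPoints.2 ⟨_, fun j => by
      simpa using toIocMod_mem_Ioc one_pos 0 (μ j), castVec_sub_sum_toIocDiv hμ.symm⟩
  rw [sub_eq_iff_eq_add.1 hred]
  exact add_mem (sum_mem fun j _ => subset_span (Set.mem_range_self j))
    (sum_mem fun j _ => zsmul_mem (subset_span (Set.mem_range_self j)) _)

lemma castVec_mem_span_of_mem_span {u : ι → ℤ} (hu : u ∈ span ℤ (Set.range k)) :
    castVec u ∈ span ℝ (Set.range fun j => castVec (k j)) := by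
  obtain ⟨c, rfl⟩ := (mem_span_range_iff_exists_fun ℤ).1 hu
  simp only [map_sum, map_zsmul, ← Int.cast_smul_eq_zsmul ℝ]
  exact sum_mem fun j _ => smul_mem _ _ (subset_span (Set.mem_range_self j))

lemma isTorsionFree_quotient_span (hB : parallelepipedPoints k ⊆ {∑ j, k j}) :
    IsTorsionFree ℤ ((ι → ℤ) ⧸ span ℤ (Set.range k)) := by
  refine .of_smul_eq_zero fun r x hrx => or_iff_not_imp_left.2 fun hr => ?_
  obtain ⟨u, rfl⟩ := mkQ_surjective _ x
  rw [← map_smul] at hrx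
  rw [mkQ_apply, Quotient.mk_eq_zero] at hrx ⊢
  refine mem_span_of_castVec_mem_span hB ?_
  have h := smul_mem _ (r : ℝ)⁻¹ (castVec_mem_span_of_mem_span hrx)
  rwa [map_zsmul, ← Int.cast_smul_eq_zsmul ℝ, smul_smul, inv_mul_cancel₀ (by exact_mod_cast hr),
    one_smul] at h

lemma isSimpleCone_openCone [Fintype ι] (hk : LinearIndependent ℝ fun j => castVec (k j))
    (hB : parallelepipedPoints k ⊆ {∑ j, k j}) : IsSimpleCone (openCone k) := by
  have := isTorsionFree_quotient_span hB
  have hkℤ : LinearIndependent ℤ k := (linearIndependent_algebraMap_comp_iff (R := ℤ) (S := ℝ)).1 hk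
  obtain ⟨b, e, hb⟩ := exists_basis_extending_of_isTorsionFree_quotient hkℤ
  let σ := Fintype.equivFin κ
  exact ⟨_, k ∘ σ.symm, b, σ.symm.toEmbedding.trans e, fun i => (hb _).symm,
    (combinations_comp_equiv _ k σ.symm).symm⟩

lemma exists_stellar_vertex (hB : ¬parallelepipedPoints k ⊆ {∑ j, k j}) :
    ∃ (w : ι → ℤ) (lam : κ → ℝ), castVec w = ∑ j, lam j • castVec (k j) ∧
      (∀ j, lam j ∈ Set.Ico 0 1) ∧ ∃ j, 0 < lam j := by
  obtain ⟨u, hu, hne⟩ := Set.not_subset.1 hB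
  obtain ⟨μ, hμ, hu⟩ := mem_parallelepipedPoints.1 hu
  refine ⟨_, _, castVec_sub_sum_toIcoDiv hu,
    fun j => by simpa using toIcoMod_mem_Ico one_pos 0 (μ j), ?_⟩
  by_contra! hzero
  have hμ1 : ∀ j, μ j = 1 := fun j => by
    by_contra h
    have := (toIcoMod_eq_self one_pos).2 ⟨(hμ j).1.le, by simpa using (hμ j).2.lt_of_ne h⟩
    linarith [hzero j, (hμ j).1]
  exact hne <| castVec_injective <| by simp [hu, hμ1]

end

def stellarFamily (k : κ → ι → ℤ) (w : ι → ℤ) (S : Finset κ) : Option S → ι → ℤ :=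
  fun o => o.elim w fun i => k i

/-- The pieces of the stellar subdivision of `openCone k` at `w = ∑ lamᵢ kᵢ` are the cones spanned
by `w` and the `kᵢ` with `i ∈ S`, for these `S`. -/
def IsStellarIndex (lam : κ → ℝ) (S : Finset κ) : Prop :=
  (∃ i, i ∉ S) ∧ ∀ i ∉ S, 0 < lam i

lemma subset_of_coeffs_eq {lam : κ → ℝ} {S T : Finset κ} (hS : IsStellarIndex lam S)
    (hT : ∀ i ∉ T, 0 < lam i) {t₁ t₂ : ℝ} {c₁ c₂ : κ → ℝ} (hc₁ : ∀ i ∈ S, 0 < c₁ i)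
    (hc₁0 : ∀ i ∉ S, c₁ i = 0) (hc₂ : ∀ i ∈ T, 0 < c₂ i) (hc₂0 : ∀ i ∉ T, c₂ i = 0)
    (h : ∀ i, t₁ * lam i + c₁ i = t₂ * lam i + c₂ i) : S ⊆ T := by
  obtain ⟨⟨i₀, hi₀⟩, hlam⟩ := hS
  have hc₂nonneg : ∀ i, 0 ≤ c₂ i := fun i => by
    by_cases hi : i ∈ T
    exacts [(hc₂ i hi).le, (hc₂0 i hi).ge]
  have ht : t₂ ≤ t₁ := by
    have := h i₀
    rw [hc₁0 i₀ hi₀] at this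
    nlinarith [hlam i₀ hi₀, hc₂nonneg i₀]
  intro i hi
  by_contra hiT
  have := h i
  rw [hc₂0 i hiT] at this
  nlinarith [hT i hiT, hc₁ i hi]

lemma eq_of_toIocMod_add_eq {a c₁ c₂ : ℝ} (hc₁ : c₁ ∈ Set.Ioc 0 1) (hc₂ : c₂ ∈ Set.Ioc 0 1)
    (h : toIocMod one_pos 0 (a + c₁) = toIocMod one_pos 0 (a + c₂)) : c₁ = c₂ := by
  obtain ⟨n, hn⟩ := (toIocMod_eq_toIocMod one_pos).1 h
  calc c₁ = toIocMod one_pos 0 c₁ := ((toIocMod_eq_self one_pos).2 (by simpa using hc₁)).symm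
    _ = toIocMod one_pos 0 c₂ := (toIocMod_eq_toIocMod one_pos).2 ⟨n, by linarith⟩
    _ = c₂ := (toIocMod_eq_self one_pos).2 (by simpa using hc₂)

section

variable [Fintype κ] {k : κ → ι → ℤ} {w : ι → ℤ} {lam : κ → ℝ} {S : Finset κ}

lemma sum_smul_stellarFamily [DecidableEq κ] (ν : Option S → ℝ) :
    ∑ o, ν o • castVec (stellarFamily k w S o) =
      ν none • castVec w + ∑ i, (if h : i ∈ S then ν (some ⟨i, h⟩) else 0) • castVec (k i) := by
  simp only [Fintype.sum_option, dite_smul, zero_smul]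
  rw [← sum_subset (subset_univ S) fun i _ hi => dif_neg hi, sum_dite_of_true fun i hi => hi]
  rfl

lemma mem_combinations_stellarFamily_iff {P : ℝ → Prop} {x : ι → ℝ} :
    x ∈ combinations P (stellarFamily k w S) ↔
      ∃ (t : ℝ) (c : κ → ℝ), P t ∧ (∀ i ∈ S, P (c i)) ∧ (∀ i ∉ S, c i = 0) ∧
        x = t • castVec w + ∑ i, c i • castVec (k i) := by
  classical
  constructor
  · rintro ⟨ν, hν, rfl⟩
    refine ⟨_, _, hν none, fun i hi => by simpa [hi] using hν _, fun i hi => by simp [hi],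
      sum_smul_stellarFamily ν⟩
  · rintro ⟨t, c, ht, hc, hc0, rfl⟩
    refine ⟨fun o => o.elim t fun i => c i, fun o => o.rec ht fun i => hc i i.2, ?_⟩
    rw [sum_smul_stellarFamily]
    congr! with i
    split_ifs with hi
    exacts [rfl, hc0 i hi]

lemma smul_add_sum_smul_eq (hw : castVec w = ∑ j, lam j • castVec (k j)) (t : ℝ) (c : κ → ℝ) :
    t • castVec w + ∑ i, c i • castVec (k i) = ∑ i, (t * lam i + c i) • castVec (k i) := by
  simp only [hw, smul_sum, smul_smul, add_smul, sum_add_distrib]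

lemma linearIndependent_stellarFamily (hk : LinearIndependent ℝ fun j => castVec (k j))
    (hw : castVec w = ∑ j, lam j • castVec (k j)) {i₀ : κ} (hi₀ : i₀ ∉ S) (hlam : lam i₀ ≠ 0) :
    LinearIndependent ℝ fun o => castVec (stellarFamily k w S o) := by
  classical
  refine Fintype.linearIndependent_iff.2 fun ν hν => ?_
  rw [sum_smul_stellarFamily, smul_add_sum_smul_eq hw] at hν
  have hcoeff := fun i => hk.eq_coords_of_eq (hν.trans (by simp) : _ = ∑ i, (0 : ℝ) • _) i
  have hnone : ν none = 0 := by simpa [hi₀, hlam] using hcoeff i₀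
  rintro (_ | ⟨i, hi⟩)
  · exact hnone
  · simpa [hnone, hi] using hcoeff i

lemma openCone_stellarFamily_subset (hw : castVec w = ∑ j, lam j • castVec (k j))
    (hlam : ∀ i, 0 ≤ lam i) (hS : ∀ i ∉ S, 0 < lam i) :
    openCone (stellarFamily k w S) ⊆ openCone k := by
  intro x hx
  obtain ⟨t, c, ht, hc, hc0, rfl⟩ := mem_combinations_stellarFamily_iff.1 hx
  refine ⟨_, fun i => ?_, smul_add_sum_smul_eq hw t c⟩
  by_cases hi : i ∈ S
  · exact add_pos_of_nonneg_of_pos (mul_nonneg ht.le (hlam i)) (hc i hi)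
  · simpa [hc0 i hi] using mul_pos ht (hS i hi)

lemma exists_isStellarIndex_mem_openCone (hw : castVec w = ∑ j, lam j • castVec (k j))
    (hlam : ∀ i, 0 ≤ lam i) (hpos : ∃ i, 0 < lam i) {x : ι → ℝ} (hx : x ∈ openCone k) :
    ∃ S, IsStellarIndex lam S ∧ x ∈ openCone (stellarFamily k w S) := by
  classical
  obtain ⟨μ, hμ, rfl⟩ := hx
  have hne : (univ.filter fun i => 0 < lam i).Nonempty :=
    let ⟨i, hi⟩ := hpos; ⟨i, by simpa using hi⟩
  -- `t` is the largest scalar with `μ - t • lam ≥ 0`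
  obtain ⟨i₀, hi₀, hmin⟩ := (univ.filter fun i => 0 < lam i).exists_min_image (μ / lam) hne
  rw [mem_filter] at hi₀
  set t := μ i₀ / lam i₀
  set c := fun i => μ i - t * lam i
  have hc : ∀ i, 0 ≤ c i := fun i => by
    rcases (hlam i).eq_or_lt with h | h
    · simpa [c, ← h] using (hμ i).le
    · have := hmin i (by simpa using h)
      simp only [Pi.div_apply, le_div_iff₀ h] at this
      simpa [c] using this
  have hci₀ : c i₀ = 0 := by simp [c, t, div_mul_cancel₀ _ hi₀.2.ne']
  set S := univ.filter fun i => 0 < c i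
  have hS : IsStellarIndex lam S := by
    refine ⟨⟨i₀, by simp [S, hci₀]⟩, fun i hi => (hlam i).lt_of_ne fun h => ?_⟩
    simp [S, c, ← h, hμ i] at hi
  refine ⟨S, hS, mem_combinations_stellarFamily_iff.2 ⟨t, c, div_pos (hμ i₀) hi₀.2,
    fun i hi => by simpa [S] using hi, fun i hi => le_antisymm (by simpa [S] using hi) (hc i), ?_⟩⟩
  rw [smul_add_sum_smul_eq hw]
  simp [c]

lemma iUnion_openCone_stellarFamily (hw : castVec w = ∑ j, lam j • castVec (k j))
    (hlam : ∀ i, 0 ≤ lam i) (hpos : ∃ i, 0 < lam i) :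
    ⋃ S ∈ {S | IsStellarIndex lam S}, openCone (stellarFamily k w S) = openCone k := by
  refine (Set.iUnion₂_subset fun S hS => openCone_stellarFamily_subset hw hlam hS.2).antisymm
    fun x hx => ?_
  obtain ⟨S, hS, hxS⟩ := exists_isStellarIndex_mem_openCone hw hlam hpos hx
  exact Set.mem_iUnion₂.2 ⟨S, hS, hxS⟩

lemma pairwiseDisjoint_openCone_stellarFamily (hk : LinearIndependent ℝ fun j => castVec (k j))
    (hw : castVec w = ∑ j, lam j • castVec (k j)) :
    {S | IsStellarIndex lam S}.PairwiseDisjoint fun S => openCone (stellarFamily k w S) := by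
  refine fun S hS T hT hST => Set.disjoint_left.2 fun x hxS hxT => hST ?_
  obtain ⟨t₁, c₁, -, hc₁, hc₁0, rfl⟩ := mem_combinations_stellarFamily_iff.1 hxS
  obtain ⟨t₂, c₂, -, hc₂, hc₂0, hx⟩ := mem_combinations_stellarFamily_iff.1 hxT
  rw [smul_add_sum_smul_eq hw, smul_add_sum_smul_eq hw] at hx
  have h := hk.eq_coords_of_eq hx
  exact (subset_of_coeffs_eq hS hT.2 hc₁ hc₁0 hc₂ hc₂0 h).antisymm
    (subset_of_coeffs_eq hT hS.2 hc₂ hc₂0 hc₁ hc₁0 fun i => (h i).symm)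

lemma exists_coeffs_of_mem_parallelepipedPoints_stellarFamily
    (hw : castVec w = ∑ j, lam j • castVec (k j)) {u : ι → ℤ}
    (hu : u ∈ parallelepipedPoints (stellarFamily k w S)) :
    ∃ (t : ℝ) (c : κ → ℝ), t ∈ Set.Ioc 0 1 ∧ (∀ i ∈ S, c i ∈ Set.Ioc 0 1) ∧ (∀ i ∉ S, c i = 0) ∧
      castVec u = ∑ i, (t * lam i + c i) • castVec (k i) := by
  obtain ⟨t, c, ht, hc, hc0, hu⟩ := mem_combinations_stellarFamily_iff.1 hu
  exact ⟨t, c, ht, hc, hc0, hu.trans (smul_add_sum_smul_eq hw t c)⟩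

lemma ncard_parallelepipedPoints_stellarFamily_lt [Fintype ι]
    (hk : LinearIndependent ℝ fun j => castVec (k j)) (hw : castVec w = ∑ j, lam j • castVec (k j))
    (hlam : ∀ i, lam i ∈ Set.Ico 0 1) (hS : IsStellarIndex lam S) :
    (parallelepipedPoints (stellarFamily k w S)).ncard < (parallelepipedPoints k).ncard := by
  obtain ⟨⟨i₀, hi₀⟩, hSpos⟩ := hS
  set P := parallelepipedPoints (stellarFamily k w S)
  choose! t c ht hc hc0 hu using fun u (hu : u ∈ P) =>
    exists_coeffs_of_mem_parallelepipedPoints_stellarFamily hw hu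
  -- `f` reduces the coordinates of a point modulo `1` into `(0, 1]`; the coordinate `i₀` stays
  -- `t * lam i₀ < 1`, so `f` misses `∑ kⱼ`, and it determines `t`, hence all of `c` modulo `1`
  let f u := u - ∑ j, toIocDiv one_pos 0 (t u * lam j + c u j) • k j
  have hf : ∀ u ∈ P,
      castVec (f u) = ∑ j, toIocMod one_pos 0 (t u * lam j + c u j) • castVec (k j) := fun u hu' => castVec_sub_sum_toIocDiv (hu u hu')
  have hti₀ : ∀ u ∈ P, t u * lam i₀ ∈ Set.Ioo 0 1 := fun u hu' => by
    obtain ⟨ht₀, ht₁⟩ := ht u hu'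
    obtain ⟨-, hl₁⟩ := hlam i₀
    exact ⟨mul_pos ht₀ (hSpos i₀ hi₀), by nlinarith [hSpos i₀ hi₀]⟩
  have hfi₀ : ∀ u ∈ P, toIocMod one_pos 0 (t u * lam i₀ + c u i₀) = t u * lam i₀ := fun u hu' => by
    rw [hc0 u hu' i₀ hi₀, add_zero, toIocMod_eq_self, zero_add]
    exact Set.Ioo_subset_Ioc_self (hti₀ u hu')
  have hmaps : Set.MapsTo f P (parallelepipedPoints k \ {∑ j, k j}) := fun u hu' => by
    refine ⟨⟨_, fun j => by simpa using toIocMod_mem_Ioc one_pos (0 : ℝ) _, hf u hu'⟩, fun h => ?_⟩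
    have h1 := hk.eq_coords_of_eq ((hf u hu').symm.trans ((congrArg castVec h).trans
      (by simp) : castVec (f u) = ∑ j, (1 : ℝ) • castVec (k j))) i₀
    exact (hti₀ u hu').2.ne (by rwa [hfi₀ u hu'] at h1)
  have hinj : Set.InjOn f P := by
    intro u₁ hu₁ u₂ hu₂ h
    have hmod := hk.eq_coords_of_eq
      ((hf u₁ hu₁).symm.trans ((congrArg castVec h).trans (hf u₂ hu₂)))
    have ht : t u₁ = t u₂ := by
      have := hmod i₀
      rw [hfi₀ u₁ hu₁, hfi₀ u₂ hu₂] at this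
      exact mul_right_cancel₀ (hSpos i₀ hi₀).ne' this
    have hc : c u₁ = c u₂ := funext fun i => by
      by_cases hi : i ∈ S
      · exact eq_of_toIocMod_add_eq (hc u₁ hu₁ i hi) (hc u₂ hu₂ i hi) (ht ▸ hmod i)
      · rw [hc0 u₁ hu₁ i hi, hc0 u₂ hu₂ i hi]
    exact castVec_injective (by rw [hu u₁ hu₁, hu u₂ hu₂, ht, hc])
  have hfin := parallelepipedPoints_finite k
  calc P.ncard ≤ (parallelepipedPoints k \ {∑ j, k j}).ncard :=
        Set.ncard_le_ncard_of_injOn f hmaps hinj hfin.sdiff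
    _ < (parallelepipedPoints k).ncard :=
        Set.ncard_sdiff_singleton_lt_of_mem (sum_mem_parallelepipedPoints k) hfin
end

def HasSimplePartition (C : Set (ι → ℝ)) : Prop :=
  ∃ parts : Finset (Set (ι → ℝ)), (∀ A ∈ parts, ∀ B ∈ parts, A ≠ B → A ∩ B = ∅) ∧
    ⋃₀ (parts : Set (Set (ι → ℝ))) = C ∧ ∀ D ∈ parts, IsSimpleCone D

lemma IsSimpleCone.hasSimplePartition {C : Set (ι → ℝ)} (hC : IsSimpleCone C) :
    HasSimplePartition C :=
  ⟨{C}, by simp, by simp, by simpa using hC⟩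

lemma HasSimplePartition.biUnion {α : Type*} {s : Set α} (hs : s.Finite) {C : α → Set (ι → ℝ)}
    (hdisj : s.PairwiseDisjoint C) (h : ∀ a ∈ s, HasSimplePartition (C a)) :
    HasSimplePartition (⋃ a ∈ s, C a) := by
  classical
  choose! parts hparts hcover hsimple using h
  refine ⟨hs.toFinset.biUnion parts, ?_, ?_, ?_⟩
  · simp only [mem_biUnion, Set.Finite.mem_toFinset]
    rintro A ⟨a, ha, hA⟩ B ⟨b, hb, hB⟩ hAB
    obtain rfl | hab := eq_or_ne a b
    · exact hparts a ha A hA B hB hAB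
    · refine Set.disjoint_iff_inter_eq_empty.1 ((hdisj ha hb hab).mono ?_ ?_)
      · exact hcover a ha ▸ Set.subset_sUnion_of_mem hA
      · exact hcover b hb ▸ Set.subset_sUnion_of_mem hB
  · refine (?_ : _ = ⋃ a ∈ s, ⋃₀ (parts a : Set (Set (ι → ℝ)))).trans (Set.iUnion₂_congr hcover)
    ext x
    simp only [coe_biUnion, Set.Finite.coe_toFinset, Set.mem_sUnion, Set.mem_iUnion, mem_coe,
      exists_prop]
    tauto
  · simp only [mem_biUnion, Set.Finite.mem_toFinset]
    rintro D ⟨a, ha, hD⟩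
    exact hsimple a ha D hD

theorem hasSimplePartition_openCone [Fintype ι] [Fintype κ] (k : κ → ι → ℤ)
    (hk : LinearIndependent ℝ fun j => castVec (k j)) : HasSimplePartition (openCone k) := by
  induction hN : (parallelepipedPoints k).ncard using Nat.strong_induction_on generalizing κ with
  | _ N ih =>
  by_cases hB : parallelepipedPoints k ⊆ {∑ j, k j}
  · exact (isSimpleCone_openCone hk hB).hasSimplePartition
  obtain ⟨w, lam, hw, hlam, hpos⟩ := exists_stellar_vertex hB
  rw [← iUnion_openCone_stellarFamily hw (fun i => (hlam i).1) hpos]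
  refine .biUnion (Set.toFinite _) (pairwiseDisjoint_openCone_stellarFamily hk hw) fun S hS => ?_
  obtain ⟨i₀, hi₀⟩ := hS.1
  exact ih _ (hN ▸ ncard_parallelepipedPoints_stellarFamily_lt hk hw hlam hS) _
    (linearIndependent_stellarFamily hk hw hi₀ (hS.2 i₀ hi₀).ne') rfl

end RationalCone

theorem simple_decomposition (n r : ℕ) (k : Fin r → (Fin n → ℤ))
    (hli : LinearIndependent ℝ (fun j => (fun i => (k j i : ℝ))))
    (Δ : Set (Fin n → ℝ))
    (hΔ : Δ = {x | ∃ lam : Fin r → ℝ, (∀ j, 0 < lam j) ∧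
      x = ∑ j, lam j • (fun i => (k j i : ℝ))}) :
    ∃ parts : Finset (Set (Fin n → ℝ)),
      (∀ A ∈ parts, ∀ B ∈ parts, A ≠ B → A ∩ B = ∅) ∧
      ⋃₀ (parts : Set (Set (Fin n → ℝ))) = Δ ∧
      ∀ Δ' ∈ parts, ∃ (m : ℕ) (v : Fin m → (Fin n → ℤ))
        (b : Module.Basis (Fin n) ℤ (Fin n → ℤ)) (ι : Fin m ↪ Fin n),
        (∀ i, v i = b (ι i)) ∧
        Δ' = {x | ∃ mu : Fin m → ℝ, (∀ i, 0 < mu i) ∧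
          x = ∑ i, mu i • (fun j => (v i j : ℝ))} := by
  obtain ⟨parts, hdisj, hcover, hsimple⟩ := RationalCone.hasSimplePartition_openCone k hli
  exact ⟨parts, hdisj, hcover.trans hΔ.symm, hsimple⟩
end
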